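/- arXiv:1308.6736 — 3 statements merged into one kernel-verified Lean document; each statement's English description precedes it below -/
import Mathlib

section
/- Let M, X', X, K', K, Y', Y, Z', Z, S', S be random variables on a common probability space, each taking values in a nonempty finite set. Assume the following four conditional independence (Markov chain) hypotheses: (i) Y and (M, X', K', K, Y', Z', S') are conditionally independent given (X, Z, S); (ii) (S, Z) and Y' are conditionally independent given (M, X', X, K', K, Z', S'); (iii) X and Y' are conditionally independent given (M, X', K', K, Z', S'); (iv) K and (M, X') are conditionally independent given (Y', K', Z', S'). Then H((K',K) | ((Z',Z),(S',S))) + I((M,X',X) ; (Y',Y) | ((K',K),(Z',Z),(S',S))) + H((S',S) | (Z',Z)) ≤ H(K' | (Z',S')) + I((M,X') ; Y' | (K',Z',S')) + H(S' | Z') + H(K | (M,X',K',Z',S')) + I(X ; Y | (Z,S)) + H(S | Z). -/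
open MeasureTheory ProbabilityTheory Real

/-- Shannon entropy (natural log) of a finitely-valued random variable. -/
noncomputable def ent {Ω : Type*} [MeasurableSpace Ω] (μ : Measure Ω)
    {α : Type*} [Fintype α] (X : Ω → α) : ℝ :=
  ∑ x : α, Real.negMulLog ((μ (X ⁻¹' {x})).toReal)

/-- Conditional Shannon entropy `H(X|Y) = H(X,Y) - H(Y)`. -/
noncomputable def condEnt {Ω : Type*} [MeasurableSpace Ω] (μ : Measure Ω)
    {α β : Type*} [Fintype α] [Fintype β] (X : Ω → α) (Y : Ω → β) : ℝ :=
  ent μ (fun ω => (X ω, Y ω)) - ent μ Y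

/-- Mutual information `I(X;Y) = H(X) + H(Y) - H(X,Y)`. -/
noncomputable def mutInfo {Ω : Type*} [MeasurableSpace Ω] (μ : Measure Ω)
    {α β : Type*} [Fintype α] [Fintype β] (X : Ω → α) (Y : Ω → β) : ℝ :=
  ent μ X + ent μ Y - ent μ (fun ω => (X ω, Y ω))

/-- Conditional mutual information `I(X;Y|Z) = H(X|Z) + H(Y|Z) - H(X,Y|Z)`. -/
noncomputable def condMutInfo {Ω : Type*} [MeasurableSpace Ω] (μ : Measure Ω)
    {α β γ : Type*} [Fintype α] [Fintype β] [Fintype γ]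
    (X : Ω → α) (Y : Ω → β) (Z : Ω → γ) : ℝ :=
  condEnt μ X Z + condEnt μ Y Z - condEnt μ (fun ω => (X ω, Y ω)) Z

/-!
Expanded into joint entropies, the right-hand side minus the left-hand side is identically
`I(K'Y'; ZS | Z'S') + I(K; ZS | K'Y'Z'S') + I(Y; K'KY'Z'S' | ZS) + I(S'; Z | Z') + I(S; Z'S' | Z)`
minus the four conditional mutual informations of the hypotheses. The latter vanish and the former
are nonnegative (Shannon's inequality, proved via `log x ≤ x - 1`).

To match joint entropies of tuples listed in different orders and bracketings, we use that the
entropy of a random variable depends only on the partition of `Ω` into its fibres, and that the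
partition of a tuple is the meet of the partitions of its entries; normalising `⊓` up to
associativity and commutativity then identifies them.
-/

theorem Setoid.ker_prodMk {Ω α β : Type*} (X : Ω → α) (Y : Ω → β) :
    Setoid.ker (fun ω => (X ω, Y ω)) = Setoid.ker X ⊓ Setoid.ker Y :=
  Setoid.ext fun _ _ => by simp only [Setoid.ker_def, Setoid.inf_iff_and, Prod.mk.injEq]

theorem preimage_prodMk_singleton {Ω α β : Type*} (X : Ω → α) (Y : Ω → β) (a : α) (b : β) :
    (fun ω => (X ω, Y ω)) ⁻¹' {(a, b)} = X ⁻¹' {a} ∩ Y ⁻¹' {b} := by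
  rw [← Set.singleton_prod_singleton, Set.mk_preimage_prod]

section Partition

variable {Ω α β : Type*} [MeasurableSpace Ω] [Fintype α] [Fintype β]

noncomputable def partitionEnt (μ : Measure Ω) (r : Setoid Ω) : ℝ :=
  ∑ᶠ B ∈ r.classes, negMulLog (μ.real B)

theorem ent_eq_partitionEnt_ker (μ : Measure Ω) (X : Ω → α) :
    ent μ X = partitionEnt μ (Setoid.ker X) := by
  set φ : Set Ω → ℝ := fun B => negMulLog (μ.real B)
  have fiber_nonempty : ∀ x, φ (X ⁻¹' {x}) ≠ 0 → ∃ ω, X ω = x := fun x hx => by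
    by_contra! h
    simp [φ, Set.eq_empty_of_forall_notMem (s := X ⁻¹' {x}) h] at hx
  have classes_eq : (Setoid.ker X).classes ∩ Function.support φ
      = Set.range (fun x => X ⁻¹' {x}) ∩ Function.support φ := by
    ext B
    simp only [Setoid.classes, Setoid.ker_def, Set.mem_inter_iff, Set.mem_range]
    constructor
    · rintro ⟨⟨ω, rfl⟩, hB⟩
      exact ⟨⟨X ω, rfl⟩, hB⟩
    · rintro ⟨⟨x, rfl⟩, hB⟩
      obtain ⟨ω, rfl⟩ := fiber_nonempty _ hB
      exact ⟨⟨ω, rfl⟩, hB⟩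
  have fiber_injOn :
      (Function.support (φ ∘ fun x => X ⁻¹' {x})).InjOn fun x => X ⁻¹' {x} := by
    intro x hx y _ hxy
    obtain ⟨ω, rfl⟩ := fiber_nonempty x hx
    show ω ∈ X ⁻¹' {y}
    rw [← show X ⁻¹' {X ω} = X ⁻¹' {y} from hxy]
    rfl
  rw [partitionEnt, ← finsum_mem_inter_support, classes_eq, finsum_mem_inter_support,
    finsum_mem_range' fiber_injOn, finsum_eq_sum_of_fintype]
  rfl

theorem ent_congr_of_ker_eq {μ : Measure Ω} {X : Ω → α} {Y : Ω → β}
    (h : Setoid.ker X = Setoid.ker Y) : ent μ X = ent μ Y := by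
  rw [ent_eq_partitionEnt_ker, ent_eq_partitionEnt_ker, h]

end Partition

theorem Real.sub_le_mul_log_div {q x : ℝ} (hq : 0 < q) (hx : 0 < x) :
    q - x ≤ q * log (q / x) := by
  have := one_sub_inv_le_log_of_pos (div_pos hq hx)
  rw [inv_div] at this
  calc q - x = q * (1 - x / q) := by field_simp
    _ ≤ q * log (q / x) := by gcongr

theorem sub_mul_div_le_mul_log {q s t r : ℝ} (hq : 0 ≤ q) (hqs : q ≤ s) (hqt : q ≤ t)
    (hsr : s ≤ r) : q - s * t / r ≤ q * (log q + log r - log s - log t) := by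
  rcases hq.eq_or_lt with rfl | hpos
  · rw [zero_mul, zero_sub, neg_nonpos]
    exact div_nonneg (mul_nonneg hqs hqt) (hqs.trans hsr)
  have hs := hpos.trans_le hqs
  have ht := hpos.trans_le hqt
  have hr := hs.trans_le hsr
  calc q - s * t / r ≤ q * log (q / (s * t / r)) := Real.sub_le_mul_log_div hpos (by positivity)
    _ = q * (log q + log r - log s - log t) := by
      rw [log_div hpos.ne' (by positivity), log_div (by positivity) hr.ne', log_mul hs.ne' ht.ne']
      ring

theorem sum_negMulLog_subadditive {α β : Type*} [Fintype α] [Fintype β] (q : α → β → ℝ)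
    (hq : ∀ a b, 0 ≤ q a b) :
    ∑ a, ∑ b, negMulLog (q a b) + negMulLog (∑ a, ∑ b, q a b)
      ≤ ∑ a, negMulLog (∑ b, q a b) + ∑ b, negMulLog (∑ a, q a b) := by
  set s := fun a => ∑ b, q a b
  set t := fun b => ∑ a, q a b
  set r := ∑ a, ∑ b, q a b
  have hqs : ∀ a b, q a b ≤ s a := fun a b =>
    Finset.single_le_sum (fun b _ => hq a b) (Finset.mem_univ b)
  have hqt : ∀ a b, q a b ≤ t b := fun a b =>
    Finset.single_le_sum (fun a _ => hq a b) (Finset.mem_univ a)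
  have hsr : ∀ a, s a ≤ r := fun a =>
    Finset.single_le_sum (fun a _ => Finset.sum_nonneg fun b _ => hq a b) (Finset.mem_univ a)
  have mass : ∑ a, ∑ b, s a * t b / r = r := by
    simp_rw [← Finset.sum_div, ← Finset.sum_mul_sum]
    rw [show ∑ b, t b = r from Finset.sum_comm, mul_self_div_self]
  have expand_r : negMulLog r = ∑ a, ∑ b, -(q a b * log r) := by
    simp only [negMulLog, neg_mul, Finset.sum_neg_distrib, Finset.sum_mul, r]
  have expand_s : ∑ a, negMulLog (s a) = ∑ a, ∑ b, -(q a b * log (s a)) := by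
    simp only [negMulLog, neg_mul, Finset.sum_neg_distrib, Finset.sum_mul, s]
  have expand_t : ∑ b, negMulLog (t b) = ∑ a, ∑ b, -(q a b * log (t b)) := by
    rw [Finset.sum_comm]
    simp only [negMulLog, neg_mul, Finset.sum_neg_distrib, Finset.sum_mul, t]
  -- Gibbs' inequality against the product of the marginals, `s a * t b / r`, of total mass `r`.
  have gibbs := Finset.sum_le_sum fun a (_ : a ∈ Finset.univ) =>
    Finset.sum_le_sum fun b (_ : b ∈ Finset.univ) =>
      sub_mul_div_le_mul_log (hq a b) (hqs a b) (hqt a b) (hsr a)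
  simp only [Finset.sum_sub_distrib, mass, mul_add, mul_sub, Finset.sum_add_distrib] at gibbs
  rw [expand_r, expand_s, expand_t]
  simp only [negMulLog, neg_mul, Finset.sum_neg_distrib]
  linarith

section Shannon

variable {Ω α β γ : Type*} [MeasurableSpace Ω] {μ : Measure Ω} [Fintype α] [Fintype β]
  [Fintype γ]

theorem ent_prodMk (X : Ω → α) (Y : Ω → β) :
    ent μ (fun ω => (X ω, Y ω)) = ∑ a, ∑ b, negMulLog (μ.real (X ⁻¹' {a} ∩ Y ⁻¹' {b})) := by
  simp only [ent, Fintype.sum_prod_type, preimage_prodMk_singleton]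
  rfl

theorem measureReal_eq_sum_inter_preimage [IsFiniteMeasure μ] [MeasurableSpace β]
    [MeasurableSingletonClass β] {V : Ω → β} (hV : Measurable V) (s : Set Ω) :
    μ.real s = ∑ b, μ.real (s ∩ V ⁻¹' {b}) := by
  rw [← measureReal_restrict_apply_univ, ← Set.preimage_univ (f := V), ← Finset.coe_univ,
    ← sum_measureReal_preimage_singleton _ fun b _ => hV (measurableSet_singleton b)]
  refine Finset.sum_congr rfl fun b _ => ?_
  rw [measureReal_restrict_apply (hV (measurableSet_singleton b)), Set.inter_comm]

theorem condMutInfo_nonneg [IsFiniteMeasure μ] [MeasurableSpace α] [MeasurableSingletonClass α]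
    [MeasurableSpace β] [MeasurableSingletonClass β] {X : Ω → α} {Y : Ω → β}
    (hX : Measurable X) (hY : Measurable Y) (C : Ω → γ) : 0 ≤ condMutInfo μ X Y C := by
  set q : γ → α → β → ℝ := fun c a b => μ.real (C ⁻¹' {c} ∩ X ⁻¹' {a} ∩ Y ⁻¹' {b})
  have ent_XC : ent μ (fun ω => (X ω, C ω)) = ∑ c, ∑ a, negMulLog (∑ b, q c a b) := by
    rw [ent_congr_of_ker_eq (Y := fun ω => (C ω, X ω))
      (by simp only [Setoid.ker_prodMk, inf_comm]), ent_prodMk]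
    refine Finset.sum_congr rfl fun c _ => Finset.sum_congr rfl fun a _ => ?_
    rw [measureReal_eq_sum_inter_preimage hY]
  have ent_YC : ent μ (fun ω => (Y ω, C ω)) = ∑ c, ∑ b, negMulLog (∑ a, q c a b) := by
    rw [ent_congr_of_ker_eq (Y := fun ω => (C ω, Y ω))
      (by simp only [Setoid.ker_prodMk, inf_comm]), ent_prodMk]
    refine Finset.sum_congr rfl fun c _ => Finset.sum_congr rfl fun b _ => ?_
    rw [measureReal_eq_sum_inter_preimage hX]
    simp only [q, Set.inter_right_comm]
  have ent_XYC : ent μ (fun ω => ((X ω, Y ω), C ω)) = ∑ c, ∑ a, ∑ b, negMulLog (q c a b) := by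
    rw [ent_congr_of_ker_eq (Y := fun ω => ((C ω, X ω), Y ω))
      (by simp only [Setoid.ker_prodMk, inf_comm, inf_left_comm, inf_assoc]), ent_prodMk,
      Fintype.sum_prod_type]
    simp only [preimage_prodMk_singleton, q]
  have ent_C : ent μ C = ∑ c, negMulLog (∑ a, ∑ b, q c a b) := by
    refine Finset.sum_congr rfl fun c _ => ?_
    rw [← measureReal_def, measureReal_eq_sum_inter_preimage hX]
    simp only [q, ← measureReal_eq_sum_inter_preimage hY]
  have := Finset.sum_le_sum fun c (_ : c ∈ Finset.univ) =>
    sum_negMulLog_subadditive (q c) fun a b => measureReal_nonneg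
  simp only [Finset.sum_add_distrib] at this
  simp only [condMutInfo, condEnt]
  rw [ent_XC, ent_YC, ent_XYC, ent_C]
  linarith

end Shannon

theorem stmt_0_general
    {Ω : Type*} [MeasurableSpace Ω] (μ : Measure Ω) [IsProbabilityMeasure μ]
    {𝓜 𝓧' 𝓧 𝓚' 𝓚 𝓨' 𝓨 𝓩' 𝓩 𝓢' 𝓢 : Type*}
    [Fintype 𝓜]
    [Fintype 𝓧']
    [Fintype 𝓧]
    [Fintype 𝓚'] [MeasurableSpace 𝓚'] [DiscreteMeasurableSpace 𝓚']
    [Fintype 𝓚] [MeasurableSpace 𝓚] [DiscreteMeasurableSpace 𝓚]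
    [Fintype 𝓨'] [MeasurableSpace 𝓨'] [DiscreteMeasurableSpace 𝓨']
    [Fintype 𝓨] [MeasurableSpace 𝓨] [DiscreteMeasurableSpace 𝓨]
    [Fintype 𝓩'] [MeasurableSpace 𝓩'] [DiscreteMeasurableSpace 𝓩']
    [Fintype 𝓩] [MeasurableSpace 𝓩] [DiscreteMeasurableSpace 𝓩]
    [Fintype 𝓢'] [MeasurableSpace 𝓢'] [DiscreteMeasurableSpace 𝓢']
    [Fintype 𝓢] [MeasurableSpace 𝓢] [DiscreteMeasurableSpace 𝓢]
    (M : Ω → 𝓜) (X' : Ω → 𝓧') (X : Ω → 𝓧) (K' : Ω → 𝓚') (K : Ω → 𝓚)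
    (Y' : Ω → 𝓨') (Y : Ω → 𝓨) (Z' : Ω → 𝓩') (Z : Ω → 𝓩) (S' : Ω → 𝓢') (S : Ω → 𝓢)
    (hK' : Measurable K') (hK : Measurable K) (hY' : Measurable Y') (hY : Measurable Y)
    (hZ' : Measurable Z') (hZ : Measurable Z) (hS' : Measurable S') (hS : Measurable S)
    -- (i) Y ⊥ (M, X', K', K, Y', Z', S') | (X, Z, S)
    (hi : condMutInfo μ Y
      (fun ω => (M ω, X' ω, K' ω, K ω, Y' ω, Z' ω, S' ω))
      (fun ω => (X ω, Z ω, S ω)) = 0)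
    -- (ii) (S, Z) ⊥ Y' | (M, X', X, K', K, Z', S')
    (hii : condMutInfo μ (fun ω => (S ω, Z ω)) Y'
      (fun ω => (M ω, X' ω, X ω, K' ω, K ω, Z' ω, S' ω)) = 0)
    -- (iii) X ⊥ Y' | (M, X', K', K, Z', S')
    (hiii : condMutInfo μ X Y'
      (fun ω => (M ω, X' ω, K' ω, K ω, Z' ω, S' ω)) = 0)
    -- (iv) K ⊥ (M, X') | (Y', K', Z', S')
    (hiv : condMutInfo μ K (fun ω => (M ω, X' ω))
      (fun ω => (Y' ω, K' ω, Z' ω, S' ω)) = 0) :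
    condEnt μ (fun ω => (K' ω, K ω)) (fun ω => ((Z' ω, Z ω), (S' ω, S ω)))
      + condMutInfo μ (fun ω => (M ω, X' ω, X ω)) (fun ω => (Y' ω, Y ω))
          (fun ω => ((K' ω, K ω), (Z' ω, Z ω), (S' ω, S ω)))
      + condEnt μ (fun ω => (S' ω, S ω)) (fun ω => (Z' ω, Z ω))
    ≤ condEnt μ K' (fun ω => (Z' ω, S' ω))
      + condMutInfo μ (fun ω => (M ω, X' ω)) Y' (fun ω => (K' ω, Z' ω, S' ω))
      + condEnt μ S' Z'
      + condEnt μ K (fun ω => (M ω, X' ω, K' ω, Z' ω, S' ω))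
      + condMutInfo μ X Y (fun ω => (Z ω, S ω))
      + condEnt μ S Z := by
  have h₁ := condMutInfo_nonneg (μ := μ) (hK'.prodMk hY') (hZ.prodMk hS) fun ω => (Z' ω, S' ω)
  have h₂ := condMutInfo_nonneg (μ := μ) hK (hZ.prodMk hS) fun ω => (K' ω, Y' ω, Z' ω, S' ω)
  have h₃ := condMutInfo_nonneg (μ := μ) hY
    (hK'.prodMk <| hK.prodMk <| hY'.prodMk <| hZ'.prodMk hS') fun ω => (Z ω, S ω)
  have h₄ := condMutInfo_nonneg (μ := μ) hS' hZ Z'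
  have h₅ := condMutInfo_nonneg (μ := μ) hS (hZ'.prodMk hS') Z
  simp only [condMutInfo, condEnt, ent_eq_partitionEnt_ker, Setoid.ker_prodMk, inf_comm,
    inf_left_comm, inf_assoc] at hi hii hiii hiv h₁ h₂ h₃ h₄ h₅ ⊢
  linarith

/-- the paper's recursive Lemma 1: under the four Markov-chain
hypotheses,
H((K',K) | ((Z',Z),(S',S))) + I((M,X',X) ; (Y',Y) | ((K',K),(Z',Z),(S',S))) + H((S',S)|(Z',Z))
  <= H(K'|(Z',S')) + I((M,X') ; Y' | (K',Z',S')) + H(S'|Z')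
     + H(K | (M,X',K',Z',S')) + I(X;Y|(Z,S)) + H(S|Z). -/
theorem stmt_0
    {Ω : Type*} [MeasurableSpace Ω] (μ : Measure Ω) [IsProbabilityMeasure μ]
    {𝓜 𝓧' 𝓧 𝓚' 𝓚 𝓨' 𝓨 𝓩' 𝓩 𝓢' 𝓢 : Type*}
    [Fintype 𝓜] [Nonempty 𝓜] [MeasurableSpace 𝓜] [DiscreteMeasurableSpace 𝓜]
    [Fintype 𝓧'] [Nonempty 𝓧'] [MeasurableSpace 𝓧'] [DiscreteMeasurableSpace 𝓧']
    [Fintype 𝓧] [Nonempty 𝓧] [MeasurableSpace 𝓧] [DiscreteMeasurableSpace 𝓧]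
    [Fintype 𝓚'] [Nonempty 𝓚'] [MeasurableSpace 𝓚'] [DiscreteMeasurableSpace 𝓚']
    [Fintype 𝓚] [Nonempty 𝓚] [MeasurableSpace 𝓚] [DiscreteMeasurableSpace 𝓚]
    [Fintype 𝓨'] [Nonempty 𝓨'] [MeasurableSpace 𝓨'] [DiscreteMeasurableSpace 𝓨']
    [Fintype 𝓨] [Nonempty 𝓨] [MeasurableSpace 𝓨] [DiscreteMeasurableSpace 𝓨]
    [Fintype 𝓩'] [Nonempty 𝓩'] [MeasurableSpace 𝓩'] [DiscreteMeasurableSpace 𝓩']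
    [Fintype 𝓩] [Nonempty 𝓩] [MeasurableSpace 𝓩] [DiscreteMeasurableSpace 𝓩]
    [Fintype 𝓢'] [Nonempty 𝓢'] [MeasurableSpace 𝓢'] [DiscreteMeasurableSpace 𝓢']
    [Fintype 𝓢] [Nonempty 𝓢] [MeasurableSpace 𝓢] [DiscreteMeasurableSpace 𝓢]
    (M : Ω → 𝓜) (X' : Ω → 𝓧') (X : Ω → 𝓧) (K' : Ω → 𝓚') (K : Ω → 𝓚)
    (Y' : Ω → 𝓨') (Y : Ω → 𝓨) (Z' : Ω → 𝓩') (Z : Ω → 𝓩) (S' : Ω → 𝓢') (S : Ω → 𝓢)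
    (hM : Measurable M) (hX' : Measurable X') (hX : Measurable X)
    (hK' : Measurable K') (hK : Measurable K) (hY' : Measurable Y') (hY : Measurable Y)
    (hZ' : Measurable Z') (hZ : Measurable Z) (hS' : Measurable S') (hS : Measurable S)
    -- (i) Y ⊥ (M, X', K', K, Y', Z', S') | (X, Z, S)
    (hi : condMutInfo μ Y
      (fun ω => (M ω, X' ω, K' ω, K ω, Y' ω, Z' ω, S' ω))
      (fun ω => (X ω, Z ω, S ω)) = 0)
    -- (ii) (S, Z) ⊥ Y' | (M, X', X, K', K, Z', S')
    (hii : condMutInfo μ (fun ω => (S ω, Z ω)) Y'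
      (fun ω => (M ω, X' ω, X ω, K' ω, K ω, Z' ω, S' ω)) = 0)
    -- (iii) X ⊥ Y' | (M, X', K', K, Z', S')
    (hiii : condMutInfo μ X Y'
      (fun ω => (M ω, X' ω, K' ω, K ω, Z' ω, S' ω)) = 0)
    -- (iv) K ⊥ (M, X') | (Y', K', Z', S')
    (hiv : condMutInfo μ K (fun ω => (M ω, X' ω))
      (fun ω => (Y' ω, K' ω, Z' ω, S' ω)) = 0) :
    condEnt μ (fun ω => (K' ω, K ω)) (fun ω => ((Z' ω, Z ω), (S' ω, S ω)))
      + condMutInfo μ (fun ω => (M ω, X' ω, X ω)) (fun ω => (Y' ω, Y ω))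
          (fun ω => ((K' ω, K ω), (Z' ω, Z ω), (S' ω, S ω)))
      + condEnt μ (fun ω => (S' ω, S ω)) (fun ω => (Z' ω, Z ω))
    ≤ condEnt μ K' (fun ω => (Z' ω, S' ω))
      + condMutInfo μ (fun ω => (M ω, X' ω)) Y' (fun ω => (K' ω, Z' ω, S' ω))
      + condEnt μ S' Z'
      + condEnt μ K (fun ω => (M ω, X' ω, K' ω, Z' ω, S' ω))
      + condMutInfo μ X Y (fun ω => (Z ω, S ω))
      + condEnt μ S Z :=
  stmt_0_general μ M X' X K' K Y' Y Z' Z S' S hK' hK hY' hY hZ' hZ hS' hS hi hii hiii hiv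
end

section
/- Let M be a random variable and, for j = 1, …, n, let X_j, Y_j, Z_j, S_j, K_j be random variables on a common probability space, each taking values in a nonempty finite set. Write X^j = (X_1, …, X_j) and similarly for the other sequences (with X^0 a constant). Assume that for every j ∈ {1, …, n}: (i) Y_j and (M, X^{j−1}, K^j, Y^{j−1}, Z^{j−1}, S^{j−1}) are conditionally independent given (X_j, Z_j, S_j); (ii) (S_j, Z_j) and Y^{j−1} are conditionally independent given (M, X^j, K^j, Z^{j−1}, S^{j−1}); (iii) X_j and Y^{j−1} are conditionally independent given (M, X^{j−1}, K^j, Z^{j−1}, S^{j−1}); (iv) K_j and (M, X^{j−1}) are conditionally independent given (Y^{j−1}, K^{j−1}, Z^{j−1}, S^{j−1}). Then H(K^n | (Z^n, S^n)) + I((M, X^n) ; Y^n | (K^n, Z^n, S^n)) + H(S^n | Z^n) ≤ Σ_{j=1}^n [ I(X_j ; Y_j | (Z_j, S_j)) + H(S_j | Z_j) + H(K_j) ]. -/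
open MeasureTheory ProbabilityTheory Real

/-- The prefix (X_1, ..., X_j) of a finite sequence of random variables,
as a single random variable with values in the product of the first j alphabets. -/
def pre {Ω : Type*} {n : ℕ} {α : Fin n → Type*} (X : ∀ j : Fin n, Ω → α j)
    (j : ℕ) (hj : j ≤ n) : Ω → ∀ i : Fin j, α (Fin.castLE hj i) :=
  fun ω i => X (Fin.castLE hj i) ω

set_option linter.unusedSectionVars false
set_option maxHeartbeats 2000000
section EntHelpers

open Function

lemma sum3_rot {α β γ : Type*} [Fintype α] [Fintype β] [Fintype γ] (f : α → β → γ → ℝ) :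
    ∑ c : γ, ∑ a : α, ∑ b : β, f a b c = ∑ a : α, ∑ b : β, ∑ c : γ, f a b c := by
  calc ∑ c : γ, ∑ a : α, ∑ b : β, f a b c
      = ∑ a : α, ∑ c : γ, ∑ b : β, f a b c := Finset.sum_comm
    _ = ∑ a : α, ∑ b : β, ∑ c : γ, f a b c :=
        Finset.sum_congr rfl fun a _ => Finset.sum_comm

lemma sum3_rot' {α β γ : Type*} [Fintype α] [Fintype β] [Fintype γ] (f : α → β → γ → ℝ) :
    ∑ b : β, ∑ c : γ, ∑ a : α, f a b c = ∑ a : α, ∑ b : β, ∑ c : γ, f a b c := by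
  calc ∑ b : β, ∑ c : γ, ∑ a : α, f a b c
      = ∑ b : β, ∑ a : α, ∑ c : γ, f a b c :=
        Finset.sum_congr rfl fun b _ => Finset.sum_comm
    _ = ∑ a : α, ∑ b : β, ∑ c : γ, f a b c := Finset.sum_comm

lemma neg_sum_mul {β : Type*} [Fintype β] (f : β → ℝ) (L : ℝ) :
    -((∑ b, f b) * L) = ∑ b, -(f b * L) := by
  rw [Finset.sum_mul, ← Finset.sum_neg_distrib]

lemma negMulLog_sum {β : Type*} [Fintype β] (f : β → ℝ) :
    negMulLog (∑ b, f b) = ∑ b, -(f b * log (∑ b', f b')) := by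
  rw [Real.negMulLog, neg_mul, neg_sum_mul]

variable {Ω : Type*} [MeasurableSpace Ω] (μ : Measure Ω) [IsProbabilityMeasure μ]

lemma ent_comp_inj {α β : Type*} [Fintype α] [Fintype β] (X : Ω → α)
    (f : α → β) (hf : Injective f) :
    ent μ (fun ω => f (X ω)) = ent μ X := by
  classical
  unfold ent
  rw [← Finset.sum_subset (Finset.subset_univ (Finset.univ.image f))]
  · rw [Finset.sum_image (fun a _ b _ h => hf h)]
    refine Finset.sum_congr rfl fun x _ => ?_
    have h1 : (fun ω => f (X ω)) ⁻¹' {f x} = X ⁻¹' {x} := by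
      ext ω; simp [hf.eq_iff]
    rw [h1]
  · intro y _ hy
    have h0 : (fun ω => f (X ω)) ⁻¹' {y} = ∅ := by
      ext ω
      simp only [Set.mem_preimage, Set.mem_singleton_iff, Set.mem_empty_iff_false, iff_false]
      intro h
      exact hy (Finset.mem_image.2 ⟨X ω, Finset.mem_univ _, h⟩)
    simp [h0]

lemma ent_congr {α β : Type*} [Fintype α] [Fintype β] (X : Ω → α) (Y : Ω → β)
    (f : α → β) (g : β → α) (hgf : ∀ a, g (f a) = a) (hfX : ∀ ω, f (X ω) = Y ω) :
    ent μ Y = ent μ X := by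
  have hf : Injective f := fun a b h => by rw [← hgf a, h, hgf]
  rw [show Y = fun ω => f (X ω) from funext fun ω => (hfX ω).symm]
  exact ent_comp_inj μ X f hf

lemma ent_const {α : Type*} [Fintype α] (c : α) : ent μ (fun _ : Ω => c) = 0 := by
  classical
  unfold ent
  rw [Finset.sum_eq_single c]
  · have h : (fun _ : Ω => c) ⁻¹' {c} = Set.univ := by ext ω; simp
    simp [h]
  · intro b _ hb
    have h : (fun _ : Ω => c) ⁻¹' {b} = ∅ := by ext ω; simp [hb.symm]
    simp [h]
  · simp

lemma measure_partition {β : Type*} [Fintype β] (B : Ω → β)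
    (hB : ∀ b, MeasurableSet (B ⁻¹' {b})) (T : Set Ω) (hT : MeasurableSet T) :
    (μ T).toReal = ∑ b, (μ (T ∩ B ⁻¹' {b})).toReal := by
  classical
  rw [← ENNReal.toReal_sum (fun b _ => measure_ne_top μ _)]
  congr 1
  rw [← measure_biUnion_finset ?hd (fun b _ => hT.inter (hB b))]
  · congr 1
    ext ω
    simp
  case hd =>
    intro b _ b' _ hbb'
    simp only [Function.onFun]
    refine Set.disjoint_left.2 fun ω hω hω' => hbb' ?_
    have h1 := hω.2; have h2 := hω'.2
    simp only [Set.mem_preimage, Set.mem_singleton_iff] at h1 h2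
    rw [← h1, ← h2]

lemma ent_submod {α β γ : Type*} [Fintype α] [Fintype β] [Fintype γ]
    (A : Ω → α) (B : Ω → β) (C : Ω → γ)
    (hA : ∀ a, MeasurableSet (A ⁻¹' {a})) (hB : ∀ b, MeasurableSet (B ⁻¹' {b}))
    (hC : ∀ c, MeasurableSet (C ⁻¹' {c})) :
    ent μ (fun ω => (A ω, B ω, C ω)) + ent μ C
      ≤ ent μ (fun ω => (A ω, C ω)) + ent μ (fun ω => (B ω, C ω)) := by
  classical
  set p : α → β → γ → ℝ := fun a b c => (μ (A ⁻¹' {a} ∩ B ⁻¹' {b} ∩ C ⁻¹' {c})).toReal with hpdef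
  have hp0 : ∀ a b c, 0 ≤ p a b c := fun a b c => ENNReal.toReal_nonneg
  have hac : ∀ a c, (μ (A ⁻¹' {a} ∩ C ⁻¹' {c})).toReal = ∑ b, p a b c := by
    intro a c
    rw [measure_partition μ B hB _ ((hA a).inter (hC c))]
    refine Finset.sum_congr rfl fun b _ => ?_
    rw [show A ⁻¹' {a} ∩ C ⁻¹' {c} ∩ B ⁻¹' {b} = A ⁻¹' {a} ∩ B ⁻¹' {b} ∩ C ⁻¹' {c} by
      ext ω; simp only [Set.mem_inter_iff]; tauto]
  have hbc : ∀ b c, (μ (B ⁻¹' {b} ∩ C ⁻¹' {c})).toReal = ∑ a, p a b c := by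
    intro b c
    rw [measure_partition μ A hA _ ((hB b).inter (hC c))]
    refine Finset.sum_congr rfl fun a _ => ?_
    rw [show B ⁻¹' {b} ∩ C ⁻¹' {c} ∩ A ⁻¹' {a} = A ⁻¹' {a} ∩ B ⁻¹' {b} ∩ C ⁻¹' {c} by
      ext ω; simp only [Set.mem_inter_iff]; tauto]
  have hc : ∀ c, (μ (C ⁻¹' {c})).toReal = ∑ a, ∑ b, p a b c := by
    intro c
    rw [measure_partition μ A hA _ (hC c)]
    refine Finset.sum_congr rfl fun a _ => ?_
    rw [measure_partition μ B hB _ ((hC c).inter (hA a))]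
    refine Finset.sum_congr rfl fun b _ => ?_
    rw [show C ⁻¹' {c} ∩ A ⁻¹' {a} ∩ B ⁻¹' {b} = A ⁻¹' {a} ∩ B ⁻¹' {b} ∩ C ⁻¹' {c} by
      ext ω; simp only [Set.mem_inter_iff]; tauto]
  have htot : ∑ c, ∑ a, ∑ b, p a b c = 1 := by
    have h1 : (μ (Set.univ : Set Ω)).toReal = ∑ c, (μ (Set.univ ∩ C ⁻¹' {c})).toReal :=
      measure_partition μ C hC _ MeasurableSet.univ
    simp only [Set.univ_inter] at h1
    rw [← Finset.sum_congr rfl fun c _ => hc c, ← h1, measure_univ, ENNReal.toReal_one]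
  have htot' : ∑ a, ∑ b, ∑ c, p a b c = 1 := by rw [← sum3_rot, htot]
  have EABC : ent μ (fun ω => (A ω, B ω, C ω)) = ∑ a, ∑ b, ∑ c, negMulLog (p a b c) := by
    unfold ent
    rw [Fintype.sum_prod_type]
    refine Finset.sum_congr rfl fun a _ => ?_
    rw [Fintype.sum_prod_type]
    refine Finset.sum_congr rfl fun b _ => Finset.sum_congr rfl fun c _ => ?_
    rw [show (fun ω => (A ω, B ω, C ω)) ⁻¹' {(a, b, c)}
        = A ⁻¹' {a} ∩ B ⁻¹' {b} ∩ C ⁻¹' {c} by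
      ext ω; simp only [Set.mem_preimage, Set.mem_singleton_iff, Prod.mk.injEq,
        Set.mem_inter_iff]; tauto]
  have EAC : ent μ (fun ω => (A ω, C ω)) = ∑ a, ∑ b, ∑ c, -(p a b c * log (∑ b', p a b' c)) := by
    unfold ent
    rw [Fintype.sum_prod_type]
    refine Finset.sum_congr rfl fun a _ => ?_
    refine Eq.trans (Finset.sum_congr rfl fun c _ => ?_) Finset.sum_comm
    rw [show (fun ω => (A ω, C ω)) ⁻¹' {(a, c)} = A ⁻¹' {a} ∩ C ⁻¹' {c} by
      ext ω; simp only [Set.mem_preimage, Set.mem_singleton_iff, Prod.mk.injEq,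
        Set.mem_inter_iff]]
    rw [hac a c]
    exact negMulLog_sum _
  have EBC : ent μ (fun ω => (B ω, C ω)) = ∑ a, ∑ b, ∑ c, -(p a b c * log (∑ a', p a' b c)) := by
    unfold ent
    rw [Fintype.sum_prod_type]
    refine Eq.trans (Finset.sum_congr rfl fun b _ => Finset.sum_congr rfl fun c _ => ?_)
      (sum3_rot' _)
    rw [show (fun ω => (B ω, C ω)) ⁻¹' {(b, c)} = B ⁻¹' {b} ∩ C ⁻¹' {c} by
      ext ω; simp only [Set.mem_preimage, Set.mem_singleton_iff, Prod.mk.injEq,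
        Set.mem_inter_iff]]
    rw [hbc b c]
    exact negMulLog_sum _
  have EC : ent μ C = ∑ a, ∑ b, ∑ c, -(p a b c * log (∑ a', ∑ b', p a' b' c)) := by
    unfold ent
    refine Eq.trans (Finset.sum_congr rfl fun c _ => ?_) (sum3_rot _)
    rw [hc c]
    rw [negMulLog_sum]
    refine Finset.sum_congr rfl fun a _ => ?_
    exact neg_sum_mul _ _
  set u : α → β → γ → ℝ :=
    fun a b c => (∑ b', p a b' c) * (∑ a', p a' b c) / (∑ a', ∑ b', p a' b' c) with hudef
  have hu0 : ∀ a b c, 0 ≤ u a b c := fun a b c =>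
    div_nonneg (mul_nonneg (Finset.sum_nonneg fun b' _ => hp0 _ _ _)
      (Finset.sum_nonneg fun a' _ => hp0 _ _ _))
      (Finset.sum_nonneg fun a' _ => Finset.sum_nonneg fun b' _ => hp0 _ _ _)
  have husum : ∑ a, ∑ b, ∑ c, u a b c ≤ 1 := by
    rw [← sum3_rot u, ← htot]
    refine Finset.sum_le_sum fun c _ => ?_
    have hcc : ∑ a, ∑ b, u a b c
        = (∑ a', ∑ b', p a' b' c) * (∑ a', ∑ b', p a' b' c) / (∑ a', ∑ b', p a' b' c) := by
      simp only [hudef, ← Finset.sum_div]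
      congr 1
      rw [← Finset.sum_mul_sum]
      congr 1
      exact Finset.sum_comm
    rw [hcc]
    by_cases h : (∑ a', ∑ b', p a' b' c) = 0
    · simp [h]
    · rw [mul_div_assoc, div_self h, mul_one]
  have claim : ∀ a b c, negMulLog (p a b c) + -(p a b c * log (∑ a', ∑ b', p a' b' c))
      - -(p a b c * log (∑ b', p a b' c)) - -(p a b c * log (∑ a', p a' b c))
      ≤ u a b c - p a b c := by
    intro a b c
    rcases eq_or_lt_of_le (hp0 a b c) with h0 | h0
    · rw [← h0]
      simp [Real.negMulLog_zero]
      exact hu0 a b c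
    · have hpac : 0 < ∑ b', p a b' c :=
        lt_of_lt_of_le h0 (Finset.single_le_sum (fun b' _ => hp0 a b' c) (Finset.mem_univ b))
      have hpbc : 0 < ∑ a', p a' b c :=
        lt_of_lt_of_le h0 (Finset.single_le_sum (fun a' _ => hp0 a' b c) (Finset.mem_univ a))
      have hpc : 0 < ∑ a', ∑ b', p a' b' c :=
        lt_of_lt_of_le hpac (Finset.single_le_sum
          (fun a' _ => Finset.sum_nonneg fun b' _ => hp0 a' b' c) (Finset.mem_univ a))
      have hu : 0 < u a b c := div_pos (mul_pos hpac hpbc) hpc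
      have hlog : log (u a b c / p a b c) ≤ u a b c / p a b c - 1 :=
        log_le_sub_one_of_pos (div_pos hu h0)
      have hmul : p a b c * log (u a b c / p a b c) ≤ u a b c - p a b c := by
        have h2 := mul_le_mul_of_nonneg_left hlog (le_of_lt h0)
        calc p a b c * log (u a b c / p a b c) ≤ p a b c * (u a b c / p a b c - 1) := h2
          _ = u a b c - p a b c := by field_simp
      refine le_trans (le_of_eq ?_) hmul
      rw [Real.log_div hu.ne' h0.ne', hudef]
      simp only
      rw [Real.log_div (mul_pos hpac hpbc).ne' hpc.ne', Real.log_mul hpac.ne' hpbc.ne',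
        Real.negMulLog]
      ring
  have main : (∑ a, ∑ b, ∑ c, negMulLog (p a b c))
      + (∑ a, ∑ b, ∑ c, -(p a b c * log (∑ a', ∑ b', p a' b' c)))
      - (∑ a, ∑ b, ∑ c, -(p a b c * log (∑ b', p a b' c)))
      - (∑ a, ∑ b, ∑ c, -(p a b c * log (∑ a', p a' b c)))
      ≤ (∑ a, ∑ b, ∑ c, u a b c) - (∑ a, ∑ b, ∑ c, p a b c) := by
    simp only [← Finset.sum_add_distrib, ← Finset.sum_sub_distrib]
    exact Finset.sum_le_sum fun a _ => Finset.sum_le_sum fun b _ =>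
      Finset.sum_le_sum fun c _ => claim a b c
  rw [EABC, EAC, EBC, EC]
  linarith [main, htot', husum]

lemma ent_subadd {α β : Type*} [Fintype α] [Fintype β]
    (A : Ω → α) (B : Ω → β)
    (hA : ∀ a, MeasurableSet (A ⁻¹' {a})) (hB : ∀ b, MeasurableSet (B ⁻¹' {b})) :
    ent μ (fun ω => (A ω, B ω)) ≤ ent μ A + ent μ B := by
  have hC : ∀ c : Fin 1, MeasurableSet ((fun _ : Ω => (0 : Fin 1)) ⁻¹' {c}) := by
    intro c
    have hc : ((fun _ : Ω => (0 : Fin 1)) ⁻¹' {c}) = Set.univ := by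
      ext ω; simp [Subsingleton.elim (0 : Fin 1) c]
    rw [hc]; exact MeasurableSet.univ
  have h := ent_submod μ A B (fun _ : Ω => (0 : Fin 1)) hA hB hC
  have e1 : ent μ (fun ω => (A ω, B ω, (0 : Fin 1))) = ent μ (fun ω => (A ω, B ω)) :=
    ent_congr μ (fun ω => (A ω, B ω)) (fun ω => (A ω, B ω, (0 : Fin 1)))
      (fun q => (q.1, q.2, 0)) (fun q => (q.1, q.2.1)) (fun _ => rfl) (fun _ => rfl)
  have e2 : ent μ (fun ω => (A ω, (0 : Fin 1))) = ent μ A :=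
    ent_congr μ A (fun ω => (A ω, (0 : Fin 1)))
      (fun a => (a, 0)) (fun q => q.1) (fun _ => rfl) (fun _ => rfl)
  have e3 : ent μ (fun ω => (B ω, (0 : Fin 1))) = ent μ B :=
    ent_congr μ B (fun ω => (B ω, (0 : Fin 1)))
      (fun b => (b, 0)) (fun q => q.1) (fun _ => rfl) (fun _ => rfl)
  have e0 : ent μ (fun _ : Ω => (0 : Fin 1)) = 0 := ent_const μ 0
  linarith [h, e1, e2, e3, e0]

end EntHelpers

section PreHelpers

lemma mset_pair {Ω α β : Type*} [MeasurableSpace Ω] (A : Ω → α) (B : Ω → β)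
    (hA : ∀ a, MeasurableSet (A ⁻¹' {a})) (hB : ∀ b, MeasurableSet (B ⁻¹' {b})) :
    ∀ x : α × β, MeasurableSet ((fun ω => (A ω, B ω)) ⁻¹' {x}) := by
  rintro ⟨a, b⟩
  have h : ((fun ω => (A ω, B ω)) ⁻¹' {(a, b)}) = A ⁻¹' {a} ∩ B ⁻¹' {b} := by
    ext ω; simp [Prod.ext_iff]
  rw [h]; exact (hA a).inter (hB b)

lemma mset_pre {Ω : Type*} {n : ℕ} {α : Fin n → Type*} [MeasurableSpace Ω]
    (X : ∀ j, Ω → α j) (hX : ∀ (i : Fin n) x, MeasurableSet (X i ⁻¹' {x}))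
    (j : ℕ) (h : j ≤ n) :
    ∀ v, MeasurableSet (pre X j h ⁻¹' {v}) := by
  intro v
  have he : pre X j h ⁻¹' {v} = ⋂ i : Fin j, X (Fin.castLE h i) ⁻¹' {v i} := by
    ext ω; simp [pre, funext_iff]
  rw [he]; exact MeasurableSet.iInter fun i => hX _ _

lemma pre_snoc {Ω : Type*} {n : ℕ} {α : Fin n → Type*} (X : ∀ j, Ω → α j) (j : ℕ)
    (h : j + 1 ≤ n) (ω : Ω) :
    pre X (j+1) h ω = Fin.snoc (pre X j (Nat.le_of_succ_le h) ω) (X ⟨j, h⟩ ω) := by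
  funext i
  refine Fin.lastCases ?_ ?_ i
  · rw [Fin.snoc_last]; rfl
  · intro i; rw [Fin.snoc_castSucc]; rfl

end PreHelpers


set_option maxHeartbeats 4000000 in
theorem stmt_key
    {Ω : Type*} [MeasurableSpace Ω] (μ : Measure Ω) [IsProbabilityMeasure μ]
    {n : ℕ}
    {𝓜 : Type*} [Fintype 𝓜] [Nonempty 𝓜] [MeasurableSpace 𝓜] [DiscreteMeasurableSpace 𝓜]
    {𝓧 𝓨 𝓩 𝓢 𝓚 : Fin n → Type*}
    [∀ j, Fintype (𝓧 j)] [∀ j, Nonempty (𝓧 j)] [∀ j, MeasurableSpace (𝓧 j)] [∀ j, DiscreteMeasurableSpace (𝓧 j)]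
    [∀ j, Fintype (𝓨 j)] [∀ j, Nonempty (𝓨 j)] [∀ j, MeasurableSpace (𝓨 j)] [∀ j, DiscreteMeasurableSpace (𝓨 j)]
    [∀ j, Fintype (𝓩 j)] [∀ j, Nonempty (𝓩 j)] [∀ j, MeasurableSpace (𝓩 j)] [∀ j, DiscreteMeasurableSpace (𝓩 j)]
    [∀ j, Fintype (𝓢 j)] [∀ j, Nonempty (𝓢 j)] [∀ j, MeasurableSpace (𝓢 j)] [∀ j, DiscreteMeasurableSpace (𝓢 j)]
    [∀ j, Fintype (𝓚 j)] [∀ j, Nonempty (𝓚 j)] [∀ j, MeasurableSpace (𝓚 j)] [∀ j, DiscreteMeasurableSpace (𝓚 j)]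
    (M : Ω → 𝓜) (X : ∀ j, Ω → 𝓧 j) (Y : ∀ j, Ω → 𝓨 j) (Z : ∀ j, Ω → 𝓩 j)
    (S : ∀ j, Ω → 𝓢 j) (K : ∀ j, Ω → 𝓚 j)
    (hM : Measurable M) (hX : ∀ j, Measurable (X j)) (hY : ∀ j, Measurable (Y j))
    (hZ : ∀ j, Measurable (Z j)) (hS : ∀ j, Measurable (S j)) (hK : ∀ j, Measurable (K j))
    (hi : ∀ j : Fin n, condMutInfo μ (Y j)
      (fun ω => (M ω, pre X j.1 j.2.le ω, pre K (j.1 + 1) j.2 ω,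
        pre Y j.1 j.2.le ω, pre Z j.1 j.2.le ω, pre S j.1 j.2.le ω))
      (fun ω => (X j ω, Z j ω, S j ω)) = 0)
    (hii : ∀ j : Fin n, condMutInfo μ (fun ω => (S j ω, Z j ω)) (pre Y j.1 j.2.le)
      (fun ω => (M ω, pre X (j.1 + 1) j.2 ω, pre K (j.1 + 1) j.2 ω,
        pre Z j.1 j.2.le ω, pre S j.1 j.2.le ω)) = 0)
    (hiii : ∀ j : Fin n, condMutInfo μ (X j) (pre Y j.1 j.2.le)
      (fun ω => (M ω, pre X j.1 j.2.le ω, pre K (j.1 + 1) j.2 ω,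
        pre Z j.1 j.2.le ω, pre S j.1 j.2.le ω)) = 0)
    (hiv : ∀ j : Fin n, condMutInfo μ (K j) (fun ω => (M ω, pre X j.1 j.2.le ω))
      (fun ω => (pre Y j.1 j.2.le ω, pre K j.1 j.2.le ω,
        pre Z j.1 j.2.le ω, pre S j.1 j.2.le ω)) = 0) :
    ∀ (j : ℕ) (hj : j ≤ n),
      ent μ (fun ω => (M ω, pre X j hj ω, pre K j hj ω, pre Z j hj ω, pre S j hj ω))
      + ent μ (fun ω => (pre Y j hj ω, pre K j hj ω, pre Z j hj ω, pre S j hj ω))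
      - ent μ (fun ω => (M ω, pre X j hj ω, pre Y j hj ω, pre K j hj ω, pre Z j hj ω, pre S j hj ω))
      - ent μ (pre Z j hj)
      ≤ ∑ i : Fin j, (condMutInfo μ (X (Fin.castLE hj i)) (Y (Fin.castLE hj i)) (fun ω => (Z (Fin.castLE hj i) ω, S (Fin.castLE hj i) ω)) + condEnt μ (S (Fin.castLE hj i)) (Z (Fin.castLE hj i)) + ent μ (K (Fin.castLE hj i))) := by
  intro j
  induction j with
  | zero =>
    intro hj
    have bz1 : ent μ (fun ω => (M ω, pre X 0 hj ω, pre K 0 hj ω, pre Z 0 hj ω, pre S 0 hj ω))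
        = ent μ M :=
      ent_congr μ M _
        (fun m => (m, fun i => i.elim0, fun i => i.elim0, fun i => i.elim0, fun i => i.elim0))
        (fun q => q.1) (fun _ => rfl)
        (fun ω => congrArg (Prod.mk (M ω)) (Subsingleton.elim _ _))
    have bz3 : ent μ (fun ω => (M ω, pre X 0 hj ω, pre Y 0 hj ω, pre K 0 hj ω, pre Z 0 hj ω, pre S 0 hj ω))
        = ent μ M :=
      ent_congr μ M _
        (fun m => (m, fun i => i.elim0, fun i => i.elim0, fun i => i.elim0, fun i => i.elim0,
          fun i => i.elim0))
        (fun q => q.1) (fun _ => rfl)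
        (fun ω => congrArg (Prod.mk (M ω)) (Subsingleton.elim _ _))
    have bz2 : ent μ (fun ω => (pre Y 0 hj ω, pre K 0 hj ω, pre Z 0 hj ω, pre S 0 hj ω)) = 0 := by
      rw [show (fun ω => (pre Y 0 hj ω, pre K 0 hj ω, pre Z 0 hj ω, pre S 0 hj ω))
          = (fun _ : Ω => ((fun i => i.elim0), (fun i => i.elim0), (fun i => i.elim0),
              (fun i => i.elim0))) from funext fun ω => Subsingleton.elim _ _]
      exact ent_const μ _
    have bz4 : ent μ (pre Z 0 hj) = 0 := by
      rw [show pre Z 0 hj = (fun _ : Ω => (fun i => i.elim0)) from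
        funext fun ω => Subsingleton.elim _ _]
      exact ent_const μ _
    simp only [Finset.univ_eq_empty, Finset.sum_empty]
    linarith [bz1, bz2, bz3, bz4]
  | succ j IH =>
    intro hj
    have msM : ∀ v : 𝓜, MeasurableSet (M ⁻¹' {v}) := fun v => hM MeasurableSet.of_discrete
    have msX : ∀ (i : Fin n) (v : 𝓧 i), MeasurableSet (X i ⁻¹' {v}) :=
      fun i v => hX i MeasurableSet.of_discrete
    have msY : ∀ (i : Fin n) (v : 𝓨 i), MeasurableSet (Y i ⁻¹' {v}) :=
      fun i v => hY i MeasurableSet.of_discrete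
    have msZ : ∀ (i : Fin n) (v : 𝓩 i), MeasurableSet (Z i ⁻¹' {v}) :=
      fun i v => hZ i MeasurableSet.of_discrete
    have msS : ∀ (i : Fin n) (v : 𝓢 i), MeasurableSet (S i ⁻¹' {v}) :=
      fun i v => hS i MeasurableSet.of_discrete
    have msK : ∀ (i : Fin n) (v : 𝓚 i), MeasurableSet (K i ⁻¹' {v}) :=
      fun i v => hK i MeasurableSet.of_discrete
    have mPX := mset_pre X msX j (Nat.le_of_succ_le hj)
    have mPY := mset_pre Y msY j (Nat.le_of_succ_le hj)
    have mPZ := mset_pre Z msZ j (Nat.le_of_succ_le hj)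
    have mPS := mset_pre S msS j (Nat.le_of_succ_le hj)
    have mPK := mset_pre K msK j (Nat.le_of_succ_le hj)
    have a1 : ent μ (fun ω => (M ω, pre X (j + 1) hj ω, pre K (j + 1) hj ω, pre Z (j + 1) hj ω, pre S (j + 1) hj ω)) = ent μ (fun ω => (M ω, pre X j (Nat.le_of_succ_le hj) ω, X ⟨j, hj⟩ ω, pre K j (Nat.le_of_succ_le hj) ω, K ⟨j, hj⟩ ω, pre Z j (Nat.le_of_succ_le hj) ω, Z ⟨j, hj⟩ ω, pre S j (Nat.le_of_succ_le hj) ω, S ⟨j, hj⟩ ω)) :=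
      ent_congr μ (fun ω => (M ω, pre X j (Nat.le_of_succ_le hj) ω, X ⟨j, hj⟩ ω, pre K j (Nat.le_of_succ_le hj) ω, K ⟨j, hj⟩ ω, pre Z j (Nat.le_of_succ_le hj) ω, Z ⟨j, hj⟩ ω, pre S j (Nat.le_of_succ_le hj) ω, S ⟨j, hj⟩ ω)) (fun ω => (M ω, pre X (j + 1) hj ω, pre K (j + 1) hj ω, pre Z (j + 1) hj ω, pre S (j + 1) hj ω))
        (fun ⟨m, px, xx, pk, kk, pz, zz, ps, ss⟩ => (m, Fin.snoc px xx, Fin.snoc pk kk, Fin.snoc pz zz, Fin.snoc ps ss))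
        (fun ⟨m, qX, qK, qZ, qS⟩ => (m, (fun i => qX i.castSucc), (qX (Fin.last j)), (fun i => qK i.castSucc), (qK (Fin.last j)), (fun i => qZ i.castSucc), (qZ (Fin.last j)), (fun i => qS i.castSucc), (qS (Fin.last j))))
        (by rintro ⟨m, px, xx, pk, kk, pz, zz, ps, ss⟩; simp [Fin.snoc_castSucc, Fin.snoc_last])
        (by intro ω; simp only [pre_snoc])
    have a2 : ent μ (fun ω => (pre Y (j + 1) hj ω, pre K (j + 1) hj ω, pre Z (j + 1) hj ω, pre S (j + 1) hj ω)) = ent μ (fun ω => (pre Y j (Nat.le_of_succ_le hj) ω, Y ⟨j, hj⟩ ω, pre K j (Nat.le_of_succ_le hj) ω, K ⟨j, hj⟩ ω, pre Z j (Nat.le_of_succ_le hj) ω, Z ⟨j, hj⟩ ω, pre S j (Nat.le_of_succ_le hj) ω, S ⟨j, hj⟩ ω)) :=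
      ent_congr μ (fun ω => (pre Y j (Nat.le_of_succ_le hj) ω, Y ⟨j, hj⟩ ω, pre K j (Nat.le_of_succ_le hj) ω, K ⟨j, hj⟩ ω, pre Z j (Nat.le_of_succ_le hj) ω, Z ⟨j, hj⟩ ω, pre S j (Nat.le_of_succ_le hj) ω, S ⟨j, hj⟩ ω)) (fun ω => (pre Y (j + 1) hj ω, pre K (j + 1) hj ω, pre Z (j + 1) hj ω, pre S (j + 1) hj ω))
        (fun ⟨py, yy, pk, kk, pz, zz, ps, ss⟩ => (Fin.snoc py yy, Fin.snoc pk kk, Fin.snoc pz zz, Fin.snoc ps ss))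
        (fun ⟨qY, qK, qZ, qS⟩ => ((fun i => qY i.castSucc), (qY (Fin.last j)), (fun i => qK i.castSucc), (qK (Fin.last j)), (fun i => qZ i.castSucc), (qZ (Fin.last j)), (fun i => qS i.castSucc), (qS (Fin.last j))))
        (by rintro ⟨py, yy, pk, kk, pz, zz, ps, ss⟩; simp [Fin.snoc_castSucc, Fin.snoc_last])
        (by intro ω; simp only [pre_snoc])
    have a3 : ent μ (fun ω => (M ω, pre X (j + 1) hj ω, pre Y (j + 1) hj ω, pre K (j + 1) hj ω, pre Z (j + 1) hj ω, pre S (j + 1) hj ω)) = ent μ (fun ω => (M ω, pre X j (Nat.le_of_succ_le hj) ω, X ⟨j, hj⟩ ω, pre Y j (Nat.le_of_succ_le hj) ω, Y ⟨j, hj⟩ ω, pre K j (Nat.le_of_succ_le hj) ω, K ⟨j, hj⟩ ω, pre Z j (Nat.le_of_succ_le hj) ω, Z ⟨j, hj⟩ ω, pre S j (Nat.le_of_succ_le hj) ω, S ⟨j, hj⟩ ω)) :=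
      ent_congr μ (fun ω => (M ω, pre X j (Nat.le_of_succ_le hj) ω, X ⟨j, hj⟩ ω, pre Y j (Nat.le_of_succ_le hj) ω, Y ⟨j, hj⟩ ω, pre K j (Nat.le_of_succ_le hj) ω, K ⟨j, hj⟩ ω, pre Z j (Nat.le_of_succ_le hj) ω, Z ⟨j, hj⟩ ω, pre S j (Nat.le_of_succ_le hj) ω, S ⟨j, hj⟩ ω)) (fun ω => (M ω, pre X (j + 1) hj ω, pre Y (j + 1) hj ω, pre K (j + 1) hj ω, pre Z (j + 1) hj ω, pre S (j + 1) hj ω))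
        (fun ⟨m, px, xx, py, yy, pk, kk, pz, zz, ps, ss⟩ => (m, Fin.snoc px xx, Fin.snoc py yy, Fin.snoc pk kk, Fin.snoc pz zz, Fin.snoc ps ss))
        (fun ⟨m, qX, qY, qK, qZ, qS⟩ => (m, (fun i => qX i.castSucc), (qX (Fin.last j)), (fun i => qY i.castSucc), (qY (Fin.last j)), (fun i => qK i.castSucc), (qK (Fin.last j)), (fun i => qZ i.castSucc), (qZ (Fin.last j)), (fun i => qS i.castSucc), (qS (Fin.last j))))
        (by rintro ⟨m, px, xx, py, yy, pk, kk, pz, zz, ps, ss⟩; simp [Fin.snoc_castSucc, Fin.snoc_last])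
        (by intro ω; simp only [pre_snoc])
    have a4 : ent μ (pre Z (j + 1) hj) = ent μ (fun ω => (pre Z j (Nat.le_of_succ_le hj) ω, Z ⟨j, hj⟩ ω)) :=
      ent_congr μ (fun ω => (pre Z j (Nat.le_of_succ_le hj) ω, Z ⟨j, hj⟩ ω)) (pre Z (j + 1) hj)
        (fun ⟨pz, zz⟩ => Fin.snoc pz zz)
        (fun qZ => ((fun i => qZ i.castSucc), (qZ (Fin.last j))))
        (by rintro ⟨pz, zz⟩; simp [Fin.snoc_castSucc, Fin.snoc_last])
        (by intro ω; simp only [pre_snoc])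
    have b1 : ent μ (fun ω => (Y ⟨j, hj⟩ ω, (X ⟨j, hj⟩ ω, Z ⟨j, hj⟩ ω, S ⟨j, hj⟩ ω))) = ent μ (fun ω => (X ⟨j, hj⟩ ω, Y ⟨j, hj⟩ ω, Z ⟨j, hj⟩ ω, S ⟨j, hj⟩ ω)) :=
      ent_congr μ (fun ω => (X ⟨j, hj⟩ ω, Y ⟨j, hj⟩ ω, Z ⟨j, hj⟩ ω, S ⟨j, hj⟩ ω)) (fun ω => (Y ⟨j, hj⟩ ω, (X ⟨j, hj⟩ ω, Z ⟨j, hj⟩ ω, S ⟨j, hj⟩ ω)))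
        (fun ⟨xx, yy, zz, ss⟩ => (yy, (xx, zz, ss)))
        (fun ⟨yy, ⟨xx, zz, ss⟩⟩ => (xx, yy, zz, ss))
        (by rintro ⟨xx, yy, zz, ss⟩; rfl)
        (fun _ => rfl)
    have b2 : ent μ (fun ω => ((M ω, pre X j (Nat.le_of_succ_le hj) ω, pre K (j + 1) hj ω, pre Y j (Nat.le_of_succ_le hj) ω, pre Z j (Nat.le_of_succ_le hj) ω, pre S j (Nat.le_of_succ_le hj) ω), (X ⟨j, hj⟩ ω, Z ⟨j, hj⟩ ω, S ⟨j, hj⟩ ω))) = ent μ (fun ω => (M ω, pre X j (Nat.le_of_succ_le hj) ω, X ⟨j, hj⟩ ω, pre Y j (Nat.le_of_succ_le hj) ω, pre K j (Nat.le_of_succ_le hj) ω, K ⟨j, hj⟩ ω, pre Z j (Nat.le_of_succ_le hj) ω, Z ⟨j, hj⟩ ω, pre S j (Nat.le_of_succ_le hj) ω, S ⟨j, hj⟩ ω)) :=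
      ent_congr μ (fun ω => (M ω, pre X j (Nat.le_of_succ_le hj) ω, X ⟨j, hj⟩ ω, pre Y j (Nat.le_of_succ_le hj) ω, pre K j (Nat.le_of_succ_le hj) ω, K ⟨j, hj⟩ ω, pre Z j (Nat.le_of_succ_le hj) ω, Z ⟨j, hj⟩ ω, pre S j (Nat.le_of_succ_le hj) ω, S ⟨j, hj⟩ ω)) (fun ω => ((M ω, pre X j (Nat.le_of_succ_le hj) ω, pre K (j + 1) hj ω, pre Y j (Nat.le_of_succ_le hj) ω, pre Z j (Nat.le_of_succ_le hj) ω, pre S j (Nat.le_of_succ_le hj) ω), (X ⟨j, hj⟩ ω, Z ⟨j, hj⟩ ω, S ⟨j, hj⟩ ω)))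
        (fun ⟨m, px, xx, py, pk, kk, pz, zz, ps, ss⟩ => ((m, px, Fin.snoc pk kk, py, pz, ps), (xx, zz, ss)))
        (fun ⟨⟨m, px, qK, py, pz, ps⟩, ⟨xx, zz, ss⟩⟩ => (m, px, xx, py, (fun i => qK i.castSucc), (qK (Fin.last j)), pz, zz, ps, ss))
        (by rintro ⟨m, px, xx, py, pk, kk, pz, zz, ps, ss⟩; simp [Fin.snoc_castSucc, Fin.snoc_last])
        (by intro ω; simp only [pre_snoc])
    have b3 : ent μ (fun ω => ((Y ⟨j, hj⟩ ω, (M ω, pre X j (Nat.le_of_succ_le hj) ω, pre K (j + 1) hj ω, pre Y j (Nat.le_of_succ_le hj) ω, pre Z j (Nat.le_of_succ_le hj) ω, pre S j (Nat.le_of_succ_le hj) ω)), (X ⟨j, hj⟩ ω, Z ⟨j, hj⟩ ω, S ⟨j, hj⟩ ω))) = ent μ (fun ω => (M ω, pre X j (Nat.le_of_succ_le hj) ω, X ⟨j, hj⟩ ω, pre Y j (Nat.le_of_succ_le hj) ω, Y ⟨j, hj⟩ ω, pre K j (Nat.le_of_succ_le hj) ω, K ⟨j, hj⟩ ω, pre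 Z j (Nat.le_of_succ_le hj) ω, Z ⟨j, hj⟩ ω, pre S j (Nat.le_of_succ_le hj) ω, S ⟨j, hj⟩ ω)) :=
      ent_congr μ (fun ω => (M ω, pre X j (Nat.le_of_succ_le hj) ω, X ⟨j, hj⟩ ω, pre Y j (Nat.le_of_succ_le hj) ω, Y ⟨j, hj⟩ ω, pre K j (Nat.le_of_succ_le hj) ω, K ⟨j, hj⟩ ω, pre Z j (Nat.le_of_succ_le hj) ω, Z ⟨j, hj⟩ ω, pre S j (Nat.le_of_succ_le hj) ω, S ⟨j, hj⟩ ω)) (fun ω => ((Y ⟨j, hj⟩ ω, (M ω, pre X j (Nat.le_of_succ_le hj) ω, pre K (j + 1) hj ω, pre Y j (Nat.le_of_succ_le hj) ω, pre Z j (Nat.le_of_succ_le hj) ω, pre S j (Nat.le_of_succ_le hj) ω)), (X ⟨j, hj⟩ ω, Z ⟨j, hj⟩ ω, S ⟨j, hj⟩ ω)))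
        (fun ⟨m, px, xx, py, yy, pk, kk, pz, zz, ps, ss⟩ => ((yy, (m, px, Fin.snoc pk kk, py, pz, ps)), (xx, zz, ss)))
        (fun ⟨⟨yy, ⟨m, px, qK, py, pz, ps⟩⟩, ⟨xx, zz, ss⟩⟩ => (m, px, xx, py, yy, (fun i => qK i.castSucc), (qK (Fin.last j)), pz, zz, ps, ss))
        (by rintro ⟨m, px, xx, py, yy, pk, kk, pz, zz, ps, ss⟩; simp [Fin.snoc_castSucc, Fin.snoc_last])
        (by intro ω; simp only [pre_snoc])
    have b4 : ent μ (fun ω => ((S ⟨j, hj⟩ ω, Z ⟨j, hj⟩ ω), (M ω, pre X (j + 1) hj ω, pre K (j + 1) hj ω, pre Z j (Nat.le_of_succ_le hj) ω, pre S j (Nat.le_of_succ_le hj) ω))) = ent μ (fun ω => (M ω, pre X j (Nat.le_of_succ_le hj) ω, X ⟨j, hj⟩ ω, pre K j (Nat.le_of_succ_le hj) ω, K ⟨j, hj⟩ ω, pre Z j (Nat.le_of_succ_le hj) ω, Z ⟨j, hj⟩ ω, pre S j (Nat.le_of_succ_le hj) ω, S ⟨j, hj⟩ ω)) :=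
      ent_congr μ (fun ω => (M ω, pre X j (Nat.le_of_succ_le hj) ω, X ⟨j, hj⟩ ω, pre K j (Nat.le_of_succ_le hj) ω, K ⟨j, hj⟩ ω, pre Z j (Nat.le_of_succ_le hj) ω, Z ⟨j, hj⟩ ω, pre S j (Nat.le_of_succ_le hj) ω, S ⟨j, hj⟩ ω)) (fun ω => ((S ⟨j, hj⟩ ω, Z ⟨j, hj⟩ ω), (M ω, pre X (j + 1) hj ω, pre K (j + 1) hj ω, pre Z j (Nat.le_of_succ_le hj) ω, pre S j (Nat.le_of_succ_le hj) ω)))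
        (fun ⟨m, px, xx, pk, kk, pz, zz, ps, ss⟩ => ((ss, zz), (m, Fin.snoc px xx, Fin.snoc pk kk, pz, ps)))
        (fun ⟨⟨ss, zz⟩, ⟨m, qX, qK, pz, ps⟩⟩ => (m, (fun i => qX i.castSucc), (qX (Fin.last j)), (fun i => qK i.castSucc), (qK (Fin.last j)), pz, zz, ps, ss))
        (by rintro ⟨m, px, xx, pk, kk, pz, zz, ps, ss⟩; simp [Fin.snoc_castSucc, Fin.snoc_last])
        (by intro ω; simp only [pre_snoc])
    have b5 : ent μ (fun ω => (pre Y j (Nat.le_of_succ_le hj) ω, (M ω, pre X (j + 1) hj ω, pre K (j + 1) hj ω, pre Z j (Nat.le_of_succ_le hj) ω, pre S j (Nat.le_of_succ_le hj) ω))) = ent μ (fun ω => (M ω, pre X j (Nat.le_of_succ_le hj) ω, X ⟨j, hj⟩ ω, pre Y j (Nat.le_of_succ_le hj) ω, pre K j (Nat.le_of_succ_le hj) ω, K ⟨j, hj⟩ ω, pre Z j (Nat.le_of_succ_le hj) ω, pre S j (Nat.le_of_succ_le hj) ω)) :=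
      ent_congr μ (fun ω => (M ω, pre X j (Nat.le_of_succ_le hj) ω, X ⟨j, hj⟩ ω, pre Y j (Nat.le_of_succ_le hj) ω, pre K j (Nat.le_of_succ_le hj) ω, K ⟨j, hj⟩ ω, pre Z j (Nat.le_of_succ_le hj) ω, pre S j (Nat.le_of_succ_le hj) ω)) (fun ω => (pre Y j (Nat.le_of_succ_le hj) ω, (M ω, pre X (j + 1) hj ω, pre K (j + 1) hj ω, pre Z j (Nat.le_of_succ_le hj) ω, pre S j (Nat.le_of_succ_le hj) ω)))
        (fun ⟨m, px, xx, py, pk, kk, pz, ps⟩ => (py, (m, Fin.snoc px xx, Fin.snoc pk kk, pz, ps)))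
        (fun ⟨py, ⟨m, qX, qK, pz, ps⟩⟩ => (m, (fun i => qX i.castSucc), (qX (Fin.last j)), py, (fun i => qK i.castSucc), (qK (Fin.last j)), pz, ps))
        (by rintro ⟨m, px, xx, py, pk, kk, pz, ps⟩; simp [Fin.snoc_castSucc, Fin.snoc_last])
        (by intro ω; simp only [pre_snoc])
    have b6 : ent μ (fun ω => (((S ⟨j, hj⟩ ω, Z ⟨j, hj⟩ ω), pre Y j (Nat.le_of_succ_le hj) ω), (M ω, pre X (j + 1) hj ω, pre K (j + 1) hj ω, pre Z j (Nat.le_of_succ_le hj) ω, pre S j (Nat.le_of_succ_le hj) ω))) = ent μ (fun ω => (M ω, pre X j (Nat.le_of_succ_le hj) ω, X ⟨j, hj⟩ ω, pre Y j (Nat.le_of_succ_le hj) ω, pre K j (Nat.le_of_succ_le hj) ω, K ⟨j, hj⟩ ω, pre Z j (Nat.le_of_succ_le hj) ω, Z ⟨j, hj⟩ ω, pre S j (Nat.le_of_succ_le hj) ω, S ⟨j, hj⟩ ω)) :=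
      ent_congr μ (fun ω => (M ω, pre X j (Nat.le_of_succ_le hj) ω, X ⟨j, hj⟩ ω, pre Y j (Nat.le_of_succ_le hj) ω, pre K j (Nat.le_of_succ_le hj) ω, K ⟨j, hj⟩ ω, pre Z j (Nat.le_of_succ_le hj) ω, Z ⟨j, hj⟩ ω, pre S j (Nat.le_of_succ_le hj) ω, S ⟨j, hj⟩ ω)) (fun ω => (((S ⟨j, hj⟩ ω, Z ⟨j, hj⟩ ω), pre Y j (Nat.le_of_succ_le hj) ω), (M ω, pre X (j + 1) hj ω, pre K (j + 1) hj ω, pre Z j (Nat.le_of_succ_le hj) ω, pre S j (Nat.le_of_succ_le hj) ω)))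
        (fun ⟨m, px, xx, py, pk, kk, pz, zz, ps, ss⟩ => (((ss, zz), py), (m, Fin.snoc px xx, Fin.snoc pk kk, pz, ps)))
        (fun ⟨⟨⟨ss, zz⟩, py⟩, ⟨m, qX, qK, pz, ps⟩⟩ => (m, (fun i => qX i.castSucc), (qX (Fin.last j)), py, (fun i => qK i.castSucc), (qK (Fin.last j)), pz, zz, ps, ss))
        (by rintro ⟨m, px, xx, py, pk, kk, pz, zz, ps, ss⟩; simp [Fin.snoc_castSucc, Fin.snoc_last])
        (by intro ω; simp only [pre_snoc])
    have b7 : ent μ (fun ω => (M ω, pre X (j + 1) hj ω, pre K (j + 1) hj ω, pre Z j (Nat.le_of_succ_le hj) ω, pre S j (Nat.le_of_succ_le hj) ω)) = ent μ (fun ω => (M ω, pre X j (Nat.le_of_succ_le hj) ω, X ⟨j, hj⟩ ω, pre K j (Nat.le_of_succ_le hj) ω, K ⟨j, hj⟩ ω, pre Z j (Nat.le_of_succ_le hj) ω, pre S j (Nat.le_of_succ_le hj) ω)) :=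
      ent_congr μ (fun ω => (M ω, pre X j (Nat.le_of_succ_le hj) ω, X ⟨j, hj⟩ ω, pre K j (Nat.le_of_succ_le hj) ω, K ⟨j, hj⟩ ω, pre Z j (Nat.le_of_succ_le hj) ω, pre S j (Nat.le_of_succ_le hj) ω)) (fun ω => (M ω, pre X (j + 1) hj ω, pre K (j + 1) hj ω, pre Z j (Nat.le_of_succ_le hj) ω, pre S j (Nat.le_of_succ_le hj) ω))
        (fun ⟨m, px, xx, pk, kk, pz, ps⟩ => (m, Fin.snoc px xx, Fin.snoc pk kk, pz, ps))
        (fun ⟨m, qX, qK, pz, ps⟩ => (m, (fun i => qX i.castSucc), (qX (Fin.last j)), (fun i => qK i.castSucc), (qK (Fin.last j)), pz, ps))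
        (by rintro ⟨m, px, xx, pk, kk, pz, ps⟩; simp [Fin.snoc_castSucc, Fin.snoc_last])
        (by intro ω; simp only [pre_snoc])
    have b8 : ent μ (fun ω => (X ⟨j, hj⟩ ω, (M ω, pre X j (Nat.le_of_succ_le hj) ω, pre K (j + 1) hj ω, pre Z j (Nat.le_of_succ_le hj) ω, pre S j (Nat.le_of_succ_le hj) ω))) = ent μ (fun ω => (M ω, pre X j (Nat.le_of_succ_le hj) ω, X ⟨j, hj⟩ ω, pre K j (Nat.le_of_succ_le hj) ω, K ⟨j, hj⟩ ω, pre Z j (Nat.le_of_succ_le hj) ω, pre S j (Nat.le_of_succ_le hj) ω)) :=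
      ent_congr μ (fun ω => (M ω, pre X j (Nat.le_of_succ_le hj) ω, X ⟨j, hj⟩ ω, pre K j (Nat.le_of_succ_le hj) ω, K ⟨j, hj⟩ ω, pre Z j (Nat.le_of_succ_le hj) ω, pre S j (Nat.le_of_succ_le hj) ω)) (fun ω => (X ⟨j, hj⟩ ω, (M ω, pre X j (Nat.le_of_succ_le hj) ω, pre K (j + 1) hj ω, pre Z j (Nat.le_of_succ_le hj) ω, pre S j (Nat.le_of_succ_le hj) ω)))
        (fun ⟨m, px, xx, pk, kk, pz, ps⟩ => (xx, (m, px, Fin.snoc pk kk, pz, ps)))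
        (fun ⟨xx, ⟨m, px, qK, pz, ps⟩⟩ => (m, px, xx, (fun i => qK i.castSucc), (qK (Fin.last j)), pz, ps))
        (by rintro ⟨m, px, xx, pk, kk, pz, ps⟩; simp [Fin.snoc_castSucc, Fin.snoc_last])
        (by intro ω; simp only [pre_snoc])
    have b9 : ent μ (fun ω => (pre Y j (Nat.le_of_succ_le hj) ω, (M ω, pre X j (Nat.le_of_succ_le hj) ω, pre K (j + 1) hj ω, pre Z j (Nat.le_of_succ_le hj) ω, pre S j (Nat.le_of_succ_le hj) ω))) = ent μ (fun ω => (M ω, pre X j (Nat.le_of_succ_le hj) ω, pre Y j (Nat.le_of_succ_le hj) ω, pre K j (Nat.le_of_succ_le hj) ω, K ⟨j, hj⟩ ω, pre Z j (Nat.le_of_succ_le hj) ω, pre S j (Nat.le_of_succ_le hj) ω)) :=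
      ent_congr μ (fun ω => (M ω, pre X j (Nat.le_of_succ_le hj) ω, pre Y j (Nat.le_of_succ_le hj) ω, pre K j (Nat.le_of_succ_le hj) ω, K ⟨j, hj⟩ ω, pre Z j (Nat.le_of_succ_le hj) ω, pre S j (Nat.le_of_succ_le hj) ω)) (fun ω => (pre Y j (Nat.le_of_succ_le hj) ω, (M ω, pre X j (Nat.le_of_succ_le hj) ω, pre K (j + 1) hj ω, pre Z j (Nat.le_of_succ_le hj) ω, pre S j (Nat.le_of_succ_le hj) ω)))
        (fun ⟨m, px, py, pk, kk, pz, ps⟩ => (py, (m, px, Fin.snoc pk kk, pz, ps)))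
        (fun ⟨py, ⟨m, px, qK, pz, ps⟩⟩ => (m, px, py, (fun i => qK i.castSucc), (qK (Fin.last j)), pz, ps))
        (by rintro ⟨m, px, py, pk, kk, pz, ps⟩; simp [Fin.snoc_castSucc, Fin.snoc_last])
        (by intro ω; simp only [pre_snoc])
    have b10 : ent μ (fun ω => ((X ⟨j, hj⟩ ω, pre Y j (Nat.le_of_succ_le hj) ω), (M ω, pre X j (Nat.le_of_succ_le hj) ω, pre K (j + 1) hj ω, pre Z j (Nat.le_of_succ_le hj) ω, pre S j (Nat.le_of_succ_le hj) ω))) = ent μ (fun ω => (M ω, pre X j (Nat.le_of_succ_le hj) ω, X ⟨j, hj⟩ ω, pre Y j (Nat.le_of_succ_le hj) ω, pre K j (Nat.le_of_succ_le hj) ω, K ⟨j, hj⟩ ω, pre Z j (Nat.le_of_succ_le hj) ω, pre S j (Nat.le_of_succ_le hj) ω)) :=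
      ent_congr μ (fun ω => (M ω, pre X j (Nat.le_of_succ_le hj) ω, X ⟨j, hj⟩ ω, pre Y j (Nat.le_of_succ_le hj) ω, pre K j (Nat.le_of_succ_le hj) ω, K ⟨j, hj⟩ ω, pre Z j (Nat.le_of_succ_le hj) ω, pre S j (Nat.le_of_succ_le hj) ω)) (fun ω => ((X ⟨j, hj⟩ ω, pre Y j (Nat.le_of_succ_le hj) ω), (M ω, pre X j (Nat.le_of_succ_le hj) ω, pre K (j + 1) hj ω, pre Z j (Nat.le_of_succ_le hj) ω, pre S j (Nat.le_of_succ_le hj) ω)))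
        (fun ⟨m, px, xx, py, pk, kk, pz, ps⟩ => ((xx, py), (m, px, Fin.snoc pk kk, pz, ps)))
        (fun ⟨⟨xx, py⟩, ⟨m, px, qK, pz, ps⟩⟩ => (m, px, xx, py, (fun i => qK i.castSucc), (qK (Fin.last j)), pz, ps))
        (by rintro ⟨m, px, xx, py, pk, kk, pz, ps⟩; simp [Fin.snoc_castSucc, Fin.snoc_last])
        (by intro ω; simp only [pre_snoc])
    have b11 : ent μ (fun ω => (M ω, pre X j (Nat.le_of_succ_le hj) ω, pre K (j + 1) hj ω, pre Z j (Nat.le_of_succ_le hj) ω, pre S j (Nat.le_of_succ_le hj) ω)) = ent μ (fun ω => (M ω, pre X j (Nat.le_of_succ_le hj) ω, pre K j (Nat.le_of_succ_le hj) ω, K ⟨j, hj⟩ ω, pre Z j (Nat.le_of_succ_le hj) ω, pre S j (Nat.le_of_succ_le hj) ω)) :=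
      ent_congr μ (fun ω => (M ω, pre X j (Nat.le_of_succ_le hj) ω, pre K j (Nat.le_of_succ_le hj) ω, K ⟨j, hj⟩ ω, pre Z j (Nat.le_of_succ_le hj) ω, pre S j (Nat.le_of_succ_le hj) ω)) (fun ω => (M ω, pre X j (Nat.le_of_succ_le hj) ω, pre K (j + 1) hj ω, pre Z j (Nat.le_of_succ_le hj) ω, pre S j (Nat.le_of_succ_le hj) ω))
        (fun ⟨m, px, pk, kk, pz, ps⟩ => (m, px, Fin.snoc pk kk, pz, ps))
        (fun ⟨m, px, qK, pz, ps⟩ => (m, px, (fun i => qK i.castSucc), (qK (Fin.last j)), pz, ps))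
        (by rintro ⟨m, px, pk, kk, pz, ps⟩; simp [Fin.snoc_castSucc, Fin.snoc_last])
        (by intro ω; simp only [pre_snoc])
    have b12 : ent μ (fun ω => (K ⟨j, hj⟩ ω, (pre Y j (Nat.le_of_succ_le hj) ω, pre K j (Nat.le_of_succ_le hj) ω, pre Z j (Nat.le_of_succ_le hj) ω, pre S j (Nat.le_of_succ_le hj) ω))) = ent μ (fun ω => (pre Y j (Nat.le_of_succ_le hj) ω, pre K j (Nat.le_of_succ_le hj) ω, K ⟨j, hj⟩ ω, pre Z j (Nat.le_of_succ_le hj) ω, pre S j (Nat.le_of_succ_le hj) ω)) :=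
      ent_congr μ (fun ω => (pre Y j (Nat.le_of_succ_le hj) ω, pre K j (Nat.le_of_succ_le hj) ω, K ⟨j, hj⟩ ω, pre Z j (Nat.le_of_succ_le hj) ω, pre S j (Nat.le_of_succ_le hj) ω)) (fun ω => (K ⟨j, hj⟩ ω, (pre Y j (Nat.le_of_succ_le hj) ω, pre K j (Nat.le_of_succ_le hj) ω, pre Z j (Nat.le_of_succ_le hj) ω, pre S j (Nat.le_of_succ_le hj) ω)))
        (fun ⟨py, pk, kk, pz, ps⟩ => (kk, (py, pk, pz, ps)))
        (fun ⟨kk, ⟨py, pk, pz, ps⟩⟩ => (py, pk, kk, pz, ps))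
        (by rintro ⟨py, pk, kk, pz, ps⟩; rfl)
        (fun _ => rfl)
    have b13 : ent μ (fun ω => ((M ω, pre X j (Nat.le_of_succ_le hj) ω), (pre Y j (Nat.le_of_succ_le hj) ω, pre K j (Nat.le_of_succ_le hj) ω, pre Z j (Nat.le_of_succ_le hj) ω, pre S j (Nat.le_of_succ_le hj) ω))) = ent μ (fun ω => (M ω, pre X j (Nat.le_of_succ_le hj) ω, pre Y j (Nat.le_of_succ_le hj) ω, pre K j (Nat.le_of_succ_le hj) ω, pre Z j (Nat.le_of_succ_le hj) ω, pre S j (Nat.le_of_succ_le hj) ω)) :=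
      ent_congr μ (fun ω => (M ω, pre X j (Nat.le_of_succ_le hj) ω, pre Y j (Nat.le_of_succ_le hj) ω, pre K j (Nat.le_of_succ_le hj) ω, pre Z j (Nat.le_of_succ_le hj) ω, pre S j (Nat.le_of_succ_le hj) ω)) (fun ω => ((M ω, pre X j (Nat.le_of_succ_le hj) ω), (pre Y j (Nat.le_of_succ_le hj) ω, pre K j (Nat.le_of_succ_le hj) ω, pre Z j (Nat.le_of_succ_le hj) ω, pre S j (Nat.le_of_succ_le hj) ω)))
        (fun ⟨m, px, py, pk, pz, ps⟩ => ((m, px), (py, pk, pz, ps)))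
        (fun ⟨⟨m, px⟩, ⟨py, pk, pz, ps⟩⟩ => (m, px, py, pk, pz, ps))
        (by rintro ⟨m, px, py, pk, pz, ps⟩; rfl)
        (fun _ => rfl)
    have b14 : ent μ (fun ω => ((K ⟨j, hj⟩ ω, (M ω, pre X j (Nat.le_of_succ_le hj) ω)), (pre Y j (Nat.le_of_succ_le hj) ω, pre K j (Nat.le_of_succ_le hj) ω, pre Z j (Nat.le_of_succ_le hj) ω, pre S j (Nat.le_of_succ_le hj) ω))) = ent μ (fun ω => (M ω, pre X j (Nat.le_of_succ_le hj) ω, pre Y j (Nat.le_of_succ_le hj) ω, pre K j (Nat.le_of_succ_le hj) ω, K ⟨j, hj⟩ ω, pre Z j (Nat.le_of_succ_le hj) ω, pre S j (Nat.le_of_succ_le hj) ω)) :=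
      ent_congr μ (fun ω => (M ω, pre X j (Nat.le_of_succ_le hj) ω, pre Y j (Nat.le_of_succ_le hj) ω, pre K j (Nat.le_of_succ_le hj) ω, K ⟨j, hj⟩ ω, pre Z j (Nat.le_of_succ_le hj) ω, pre S j (Nat.le_of_succ_le hj) ω)) (fun ω => ((K ⟨j, hj⟩ ω, (M ω, pre X j (Nat.le_of_succ_le hj) ω)), (pre Y j (Nat.le_of_succ_le hj) ω, pre K j (Nat.le_of_succ_le hj) ω, pre Z j (Nat.le_of_succ_le hj) ω, pre S j (Nat.le_of_succ_le hj) ω)))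
        (fun ⟨m, px, py, pk, kk, pz, ps⟩ => ((kk, (m, px)), (py, pk, pz, ps)))
        (fun ⟨⟨kk, ⟨m, px⟩⟩, ⟨py, pk, pz, ps⟩⟩ => (m, px, py, pk, kk, pz, ps))
        (by rintro ⟨m, px, py, pk, kk, pz, ps⟩; rfl)
        (fun _ => rfl)
    have b15 : ent μ (fun ω => ((X ⟨j, hj⟩ ω, Y ⟨j, hj⟩ ω), (Z ⟨j, hj⟩ ω, S ⟨j, hj⟩ ω))) = ent μ (fun ω => (X ⟨j, hj⟩ ω, Y ⟨j, hj⟩ ω, Z ⟨j, hj⟩ ω, S ⟨j, hj⟩ ω)) :=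
      ent_congr μ (fun ω => (X ⟨j, hj⟩ ω, Y ⟨j, hj⟩ ω, Z ⟨j, hj⟩ ω, S ⟨j, hj⟩ ω)) (fun ω => ((X ⟨j, hj⟩ ω, Y ⟨j, hj⟩ ω), (Z ⟨j, hj⟩ ω, S ⟨j, hj⟩ ω)))
        (fun ⟨xx, yy, zz, ss⟩ => ((xx, yy), (zz, ss)))
        (fun ⟨⟨xx, yy⟩, ⟨zz, ss⟩⟩ => (xx, yy, zz, ss))
        (by rintro ⟨xx, yy, zz, ss⟩; rfl)
        (fun _ => rfl)
    have b16 : ent μ (fun ω => (S ⟨j, hj⟩ ω, Z ⟨j, hj⟩ ω)) = ent μ (fun ω => (Z ⟨j, hj⟩ ω, S ⟨j, hj⟩ ω)) :=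
      ent_congr μ (fun ω => (Z ⟨j, hj⟩ ω, S ⟨j, hj⟩ ω)) (fun ω => (S ⟨j, hj⟩ ω, Z ⟨j, hj⟩ ω))
        (fun ⟨zz, ss⟩ => (ss, zz))
        (fun ⟨ss, zz⟩ => (zz, ss))
        (by rintro ⟨zz, ss⟩; rfl)
        (fun _ => rfl)
    have b17 : ent μ (fun ω => ((M ω, pre X j (Nat.le_of_succ_le hj) ω, pre K j (Nat.le_of_succ_le hj) ω, pre Z j (Nat.le_of_succ_le hj) ω, pre S j (Nat.le_of_succ_le hj) ω), K ⟨j, hj⟩ ω)) = ent μ (fun ω => (M ω, pre X j (Nat.le_of_succ_le hj) ω, pre K j (Nat.le_of_succ_le hj) ω, K ⟨j, hj⟩ ω, pre Z j (Nat.le_of_succ_le hj) ω, pre S j (Nat.le_of_succ_le hj) ω)) :=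
      ent_congr μ (fun ω => (M ω, pre X j (Nat.le_of_succ_le hj) ω, pre K j (Nat.le_of_succ_le hj) ω, K ⟨j, hj⟩ ω, pre Z j (Nat.le_of_succ_le hj) ω, pre S j (Nat.le_of_succ_le hj) ω)) (fun ω => ((M ω, pre X j (Nat.le_of_succ_le hj) ω, pre K j (Nat.le_of_succ_le hj) ω, pre Z j (Nat.le_of_succ_le hj) ω, pre S j (Nat.le_of_succ_le hj) ω), K ⟨j, hj⟩ ω))
        (fun ⟨m, px, pk, kk, pz, ps⟩ => ((m, px, pk, pz, ps), kk))
        (fun ⟨⟨m, px, pk, pz, ps⟩, kk⟩ => (m, px, pk, kk, pz, ps))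
        (by rintro ⟨m, px, pk, kk, pz, ps⟩; rfl)
        (fun _ => rfl)
    have b18 : ent μ (fun ω => ((pre Y j (Nat.le_of_succ_le hj) ω, pre K j (Nat.le_of_succ_le hj) ω, K ⟨j, hj⟩ ω, pre Z j (Nat.le_of_succ_le hj) ω, pre S j (Nat.le_of_succ_le hj) ω), (Y ⟨j, hj⟩ ω, (Z ⟨j, hj⟩ ω, S ⟨j, hj⟩ ω)))) = ent μ (fun ω => (pre Y j (Nat.le_of_succ_le hj) ω, Y ⟨j, hj⟩ ω, pre K j (Nat.le_of_succ_le hj) ω, K ⟨j, hj⟩ ω, pre Z j (Nat.le_of_succ_le hj) ω, Z ⟨j, hj⟩ ω, pre S j (Nat.le_of_succ_le hj) ω, S ⟨j, hj⟩ ω)) :=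
      ent_congr μ (fun ω => (pre Y j (Nat.le_of_succ_le hj) ω, Y ⟨j, hj⟩ ω, pre K j (Nat.le_of_succ_le hj) ω, K ⟨j, hj⟩ ω, pre Z j (Nat.le_of_succ_le hj) ω, Z ⟨j, hj⟩ ω, pre S j (Nat.le_of_succ_le hj) ω, S ⟨j, hj⟩ ω)) (fun ω => ((pre Y j (Nat.le_of_succ_le hj) ω, pre K j (Nat.le_of_succ_le hj) ω, K ⟨j, hj⟩ ω, pre Z j (Nat.le_of_succ_le hj) ω, pre S j (Nat.le_of_succ_le hj) ω), (Y ⟨j, hj⟩ ω, (Z ⟨j, hj⟩ ω, S ⟨j, hj⟩ ω))))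
        (fun ⟨py, yy, pk, kk, pz, zz, ps, ss⟩ => ((py, pk, kk, pz, ps), (yy, (zz, ss))))
        (fun ⟨⟨py, pk, kk, pz, ps⟩, ⟨yy, ⟨zz, ss⟩⟩⟩ => (py, yy, pk, kk, pz, zz, ps, ss))
        (by rintro ⟨py, yy, pk, kk, pz, zz, ps, ss⟩; rfl)
        (fun _ => rfl)
    have b19 : ent μ (fun ω => ((pre Y j (Nat.le_of_succ_le hj) ω, pre K j (Nat.le_of_succ_le hj) ω, K ⟨j, hj⟩ ω, pre Z j (Nat.le_of_succ_le hj) ω, pre S j (Nat.le_of_succ_le hj) ω), (Z ⟨j, hj⟩ ω, S ⟨j, hj⟩ ω))) = ent μ (fun ω => (pre Y j (Nat.le_of_succ_le hj) ω, pre K j (Nat.le_of_succ_le hj) ω, K ⟨j, hj⟩ ω, pre Z j (Nat.le_of_succ_le hj) ω, Z ⟨j, hj⟩ ω, pre S j (Nat.le_of_succ_le hj) ω, S ⟨j, hj⟩ ω)) :=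
      ent_congr μ (fun ω => (pre Y j (Nat.le_of_succ_le hj) ω, pre K j (Nat.le_of_succ_le hj) ω, K ⟨j, hj⟩ ω, pre Z j (Nat.le_of_succ_le hj) ω, Z ⟨j, hj⟩ ω, pre S j (Nat.le_of_succ_le hj) ω, S ⟨j, hj⟩ ω)) (fun ω => ((pre Y j (Nat.le_of_succ_le hj) ω, pre K j (Nat.le_of_succ_le hj) ω, K ⟨j, hj⟩ ω, pre Z j (Nat.le_of_succ_le hj) ω, pre S j (Nat.le_of_succ_le hj) ω), (Z ⟨j, hj⟩ ω, S ⟨j, hj⟩ ω)))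
        (fun ⟨py, pk, kk, pz, zz, ps, ss⟩ => ((py, pk, kk, pz, ps), (zz, ss)))
        (fun ⟨⟨py, pk, kk, pz, ps⟩, ⟨zz, ss⟩⟩ => (py, pk, kk, pz, zz, ps, ss))
        (by rintro ⟨py, pk, kk, pz, zz, ps, ss⟩; rfl)
        (fun _ => rfl)
    have b20 : ent μ (fun ω => ((pre Y j (Nat.le_of_succ_le hj) ω, pre K j (Nat.le_of_succ_le hj) ω, K ⟨j, hj⟩ ω, pre S j (Nat.le_of_succ_le hj) ω), ((Z ⟨j, hj⟩ ω, S ⟨j, hj⟩ ω), pre Z j (Nat.le_of_succ_le hj) ω))) = ent μ (fun ω => (pre Y j (Nat.le_of_succ_le hj) ω, pre K j (Nat.le_of_succ_le hj) ω, K ⟨j, hj⟩ ω, pre Z j (Nat.le_of_succ_le hj) ω, Z ⟨j, hj⟩ ω, pre S j (Nat.le_of_succ_le hj) ω, S ⟨j, hj⟩ ω)) :=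
      ent_congr μ (fun ω => (pre Y j (Nat.le_of_succ_le hj) ω, pre K j (Nat.le_of_succ_le hj) ω, K ⟨j, hj⟩ ω, pre Z j (Nat.le_of_succ_le hj) ω, Z ⟨j, hj⟩ ω, pre S j (Nat.le_of_succ_le hj) ω, S ⟨j, hj⟩ ω)) (fun ω => ((pre Y j (Nat.le_of_succ_le hj) ω, pre K j (Nat.le_of_succ_le hj) ω, K ⟨j, hj⟩ ω, pre S j (Nat.le_of_succ_le hj) ω), ((Z ⟨j, hj⟩ ω, S ⟨j, hj⟩ ω), pre Z j (Nat.le_of_succ_le hj) ω)))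
        (fun ⟨py, pk, kk, pz, zz, ps, ss⟩ => ((py, pk, kk, ps), ((zz, ss), pz)))
        (fun ⟨⟨py, pk, kk, ps⟩, ⟨⟨zz, ss⟩, pz⟩⟩ => (py, pk, kk, pz, zz, ps, ss))
        (by rintro ⟨py, pk, kk, pz, zz, ps, ss⟩; rfl)
        (fun _ => rfl)
    have b21 : ent μ (fun ω => ((pre Y j (Nat.le_of_succ_le hj) ω, pre K j (Nat.le_of_succ_le hj) ω, K ⟨j, hj⟩ ω, pre S j (Nat.le_of_succ_le hj) ω), pre Z j (Nat.le_of_succ_le hj) ω)) = ent μ (fun ω => (pre Y j (Nat.le_of_succ_le hj) ω, pre K j (Nat.le_of_succ_le hj) ω, K ⟨j, hj⟩ ω, pre Z j (Nat.le_of_succ_le hj) ω, pre S j (Nat.le_of_succ_le hj) ω)) :=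
      ent_congr μ (fun ω => (pre Y j (Nat.le_of_succ_le hj) ω, pre K j (Nat.le_of_succ_le hj) ω, K ⟨j, hj⟩ ω, pre Z j (Nat.le_of_succ_le hj) ω, pre S j (Nat.le_of_succ_le hj) ω)) (fun ω => ((pre Y j (Nat.le_of_succ_le hj) ω, pre K j (Nat.le_of_succ_le hj) ω, K ⟨j, hj⟩ ω, pre S j (Nat.le_of_succ_le hj) ω), pre Z j (Nat.le_of_succ_le hj) ω))
        (fun ⟨py, pk, kk, pz, ps⟩ => ((py, pk, kk, ps), pz))
        (fun ⟨⟨py, pk, kk, ps⟩, pz⟩ => (py, pk, kk, pz, ps))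
        (by rintro ⟨py, pk, kk, pz, ps⟩; rfl)
        (fun _ => rfl)
    have b22 : ent μ (fun ω => ((Z ⟨j, hj⟩ ω, S ⟨j, hj⟩ ω), pre Z j (Nat.le_of_succ_le hj) ω)) = ent μ (fun ω => (pre Z j (Nat.le_of_succ_le hj) ω, Z ⟨j, hj⟩ ω, S ⟨j, hj⟩ ω)) :=
      ent_congr μ (fun ω => (pre Z j (Nat.le_of_succ_le hj) ω, Z ⟨j, hj⟩ ω, S ⟨j, hj⟩ ω)) (fun ω => ((Z ⟨j, hj⟩ ω, S ⟨j, hj⟩ ω), pre Z j (Nat.le_of_succ_le hj) ω))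
        (fun ⟨pz, zz, ss⟩ => ((zz, ss), pz))
        (fun ⟨⟨zz, ss⟩, pz⟩ => (pz, zz, ss))
        (by rintro ⟨pz, zz, ss⟩; rfl)
        (fun _ => rfl)
    have b23 : ent μ (fun ω => (pre Z j (Nat.le_of_succ_le hj) ω, (S ⟨j, hj⟩ ω, Z ⟨j, hj⟩ ω))) = ent μ (fun ω => (pre Z j (Nat.le_of_succ_le hj) ω, Z ⟨j, hj⟩ ω, S ⟨j, hj⟩ ω)) :=
      ent_congr μ (fun ω => (pre Z j (Nat.le_of_succ_le hj) ω, Z ⟨j, hj⟩ ω, S ⟨j, hj⟩ ω)) (fun ω => (pre Z j (Nat.le_of_succ_le hj) ω, (S ⟨j, hj⟩ ω, Z ⟨j, hj⟩ ω)))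
        (fun ⟨pz, zz, ss⟩ => (pz, (ss, zz)))
        (fun ⟨pz, ⟨ss, zz⟩⟩ => (pz, zz, ss))
        (by rintro ⟨pz, zz, ss⟩; rfl)
        (fun _ => rfl)
    have hi2 : condMutInfo μ (Y ⟨j, hj⟩)
        (fun ω => (M ω, pre X j (Nat.le_of_succ_le hj) ω, pre K (j + 1) hj ω,
          pre Y j (Nat.le_of_succ_le hj) ω, pre Z j (Nat.le_of_succ_le hj) ω,
          pre S j (Nat.le_of_succ_le hj) ω))
        (fun ω => (X ⟨j, hj⟩ ω, Z ⟨j, hj⟩ ω, S ⟨j, hj⟩ ω)) = 0 := hi ⟨j, hj⟩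
    have hii2 : condMutInfo μ (fun ω => (S ⟨j, hj⟩ ω, Z ⟨j, hj⟩ ω))
        (pre Y j (Nat.le_of_succ_le hj))
        (fun ω => (M ω, pre X (j + 1) hj ω, pre K (j + 1) hj ω,
          pre Z j (Nat.le_of_succ_le hj) ω, pre S j (Nat.le_of_succ_le hj) ω)) = 0 := hii ⟨j, hj⟩
    have hiii2 : condMutInfo μ (X ⟨j, hj⟩) (pre Y j (Nat.le_of_succ_le hj))
        (fun ω => (M ω, pre X j (Nat.le_of_succ_le hj) ω, pre K (j + 1) hj ω,
          pre Z j (Nat.le_of_succ_le hj) ω, pre S j (Nat.le_of_succ_le hj) ω)) = 0 := hiii ⟨j, hj⟩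
    have hiv2 : condMutInfo μ (K ⟨j, hj⟩) (fun ω => (M ω, pre X j (Nat.le_of_succ_le hj) ω))
        (fun ω => (pre Y j (Nat.le_of_succ_le hj) ω, pre K j (Nat.le_of_succ_le hj) ω,
          pre Z j (Nat.le_of_succ_le hj) ω, pre S j (Nat.le_of_succ_le hj) ω)) = 0 := hiv ⟨j, hj⟩
    simp only [condMutInfo, condEnt] at hi2 hii2 hiii2 hiv2
    have i1 : ent μ (fun ω => ((M ω, pre X j (Nat.le_of_succ_le hj) ω,
          pre K j (Nat.le_of_succ_le hj) ω, pre Z j (Nat.le_of_succ_le hj) ω,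
          pre S j (Nat.le_of_succ_le hj) ω), K ⟨j, hj⟩ ω))
        ≤ ent μ (fun ω => (M ω, pre X j (Nat.le_of_succ_le hj) ω,
            pre K j (Nat.le_of_succ_le hj) ω, pre Z j (Nat.le_of_succ_le hj) ω,
            pre S j (Nat.le_of_succ_le hj) ω)) + ent μ (K ⟨j, hj⟩) :=
      ent_subadd μ _ _
        (mset_pair _ _ msM (mset_pair _ _ mPX (mset_pair _ _ mPK (mset_pair _ _ mPZ mPS))))
        (msK ⟨j, hj⟩)
    have i2 : ent μ (fun ω => ((pre Y j (Nat.le_of_succ_le hj) ω,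
          pre K j (Nat.le_of_succ_le hj) ω, K ⟨j, hj⟩ ω, pre Z j (Nat.le_of_succ_le hj) ω,
          pre S j (Nat.le_of_succ_le hj) ω), Y ⟨j, hj⟩ ω, Z ⟨j, hj⟩ ω, S ⟨j, hj⟩ ω))
        + ent μ (fun ω => (Z ⟨j, hj⟩ ω, S ⟨j, hj⟩ ω))
        ≤ ent μ (fun ω => ((pre Y j (Nat.le_of_succ_le hj) ω,
            pre K j (Nat.le_of_succ_le hj) ω, K ⟨j, hj⟩ ω, pre Z j (Nat.le_of_succ_le hj) ω,
            pre S j (Nat.le_of_succ_le hj) ω), Z ⟨j, hj⟩ ω, S ⟨j, hj⟩ ω))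
          + ent μ (fun ω => (Y ⟨j, hj⟩ ω, Z ⟨j, hj⟩ ω, S ⟨j, hj⟩ ω)) :=
      ent_submod μ _ _ _
        (mset_pair _ _ mPY (mset_pair _ _ mPK (mset_pair _ _ (msK ⟨j, hj⟩)
          (mset_pair _ _ mPZ mPS))))
        (msY ⟨j, hj⟩)
        (mset_pair _ _ (msZ ⟨j, hj⟩) (msS ⟨j, hj⟩))
    have i3 : ent μ (fun ω => ((pre Y j (Nat.le_of_succ_le hj) ω,
          pre K j (Nat.le_of_succ_le hj) ω, K ⟨j, hj⟩ ω, pre S j (Nat.le_of_succ_le hj) ω),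
          (Z ⟨j, hj⟩ ω, S ⟨j, hj⟩ ω), pre Z j (Nat.le_of_succ_le hj) ω))
        + ent μ (pre Z j (Nat.le_of_succ_le hj))
        ≤ ent μ (fun ω => ((pre Y j (Nat.le_of_succ_le hj) ω,
            pre K j (Nat.le_of_succ_le hj) ω, K ⟨j, hj⟩ ω, pre S j (Nat.le_of_succ_le hj) ω),
            pre Z j (Nat.le_of_succ_le hj) ω))
          + ent μ (fun ω => ((Z ⟨j, hj⟩ ω, S ⟨j, hj⟩ ω), pre Z j (Nat.le_of_succ_le hj) ω)) :=
      ent_submod μ _ _ _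
        (mset_pair _ _ mPY (mset_pair _ _ mPK (mset_pair _ _ (msK ⟨j, hj⟩) mPS)))
        (mset_pair _ _ (msZ ⟨j, hj⟩) (msS ⟨j, hj⟩))
        mPZ
    have i4 : ent μ (fun ω => (pre Z j (Nat.le_of_succ_le hj) ω,
          S ⟨j, hj⟩ ω, Z ⟨j, hj⟩ ω))
        + ent μ (Z ⟨j, hj⟩)
        ≤ ent μ (fun ω => (pre Z j (Nat.le_of_succ_le hj) ω, Z ⟨j, hj⟩ ω))
          + ent μ (fun ω => (S ⟨j, hj⟩ ω, Z ⟨j, hj⟩ ω)) :=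
      ent_submod μ _ _ _ mPZ (msS ⟨j, hj⟩) (msZ ⟨j, hj⟩)
    have hterm : condMutInfo μ (X ⟨j, hj⟩) (Y ⟨j, hj⟩)
          (fun ω => (Z ⟨j, hj⟩ ω, S ⟨j, hj⟩ ω))
        + condEnt μ (S ⟨j, hj⟩) (Z ⟨j, hj⟩) + ent μ (K ⟨j, hj⟩)
        = ent μ (fun ω => (X ⟨j, hj⟩ ω, Z ⟨j, hj⟩ ω, S ⟨j, hj⟩ ω))
          + ent μ (fun ω => (Y ⟨j, hj⟩ ω, Z ⟨j, hj⟩ ω, S ⟨j, hj⟩ ω))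
          - ent μ (fun ω => (X ⟨j, hj⟩ ω, Y ⟨j, hj⟩ ω, Z ⟨j, hj⟩ ω, S ⟨j, hj⟩ ω))
          - ent μ (Z ⟨j, hj⟩) + ent μ (K ⟨j, hj⟩) := by
      simp only [condMutInfo, condEnt]
      linarith [b15, b16]
    have hsum : (∑ i : Fin (j + 1), (condMutInfo μ (X (Fin.castLE hj i)) (Y (Fin.castLE hj i)) (fun ω => (Z (Fin.castLE hj i) ω, S (Fin.castLE hj i) ω)) + condEnt μ (S (Fin.castLE hj i)) (Z (Fin.castLE hj i)) + ent μ (K (Fin.castLE hj i))))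
        = (∑ i : Fin j, (condMutInfo μ (X (Fin.castLE (Nat.le_of_succ_le hj) i)) (Y (Fin.castLE (Nat.le_of_succ_le hj) i)) (fun ω => (Z (Fin.castLE (Nat.le_of_succ_le hj) i) ω, S (Fin.castLE (Nat.le_of_succ_le hj) i) ω)) + condEnt μ (S (Fin.castLE (Nat.le_of_succ_le hj) i)) (Z (Fin.castLE (Nat.le_of_succ_le hj) i)) + ent μ (K (Fin.castLE (Nat.le_of_succ_le hj) i))))
          + (condMutInfo μ (X ⟨j, hj⟩) (Y ⟨j, hj⟩) (fun ω => (Z ⟨j, hj⟩ ω, S ⟨j, hj⟩ ω)) + condEnt μ (S ⟨j, hj⟩) (Z ⟨j, hj⟩) + ent μ (K ⟨j, hj⟩)) :=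
      Fin.sum_univ_castSucc _
    rw [hsum]
    linarith [IH (Nat.le_of_succ_le hj), hi2, hii2, hiii2, hiv2, a1, a2, a3, a4,
      b1, b2, b3, b4, b5, b6, b7, b8, b9, b10, b11, b12, b13, b14, b15, b16, b17,
      b18, b19, b20, b21, b22, b23, i1, i2, i3, i4, hterm]

/-- telescoped consequence of the paper's Lemma 1. Under the four
per-index Markov hypotheses,
H(K^n | (Z^n,S^n)) + I((M,X^n) ; Y^n | (K^n,Z^n,S^n)) + H(S^n | Z^n)
  <= sum_j [ I(X_j;Y_j|(Z_j,S_j)) + H(S_j|Z_j) + H(K_j) ].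
Here the index j : Fin n corresponds to the paper's (j+1), so that the prefix
of length j.1 is the paper's X^{j-1} and the prefix of length j.1+1 is X^j. -/
theorem stmt_1
    {Ω : Type*} [MeasurableSpace Ω] (μ : Measure Ω) [IsProbabilityMeasure μ]
    {n : ℕ}
    {𝓜 : Type*} [Fintype 𝓜] [Nonempty 𝓜] [MeasurableSpace 𝓜] [DiscreteMeasurableSpace 𝓜]
    {𝓧 𝓨 𝓩 𝓢 𝓚 : Fin n → Type*}
    [∀ j, Fintype (𝓧 j)] [∀ j, Nonempty (𝓧 j)] [∀ j, MeasurableSpace (𝓧 j)] [∀ j, DiscreteMeasurableSpace (𝓧 j)]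
    [∀ j, Fintype (𝓨 j)] [∀ j, Nonempty (𝓨 j)] [∀ j, MeasurableSpace (𝓨 j)] [∀ j, DiscreteMeasurableSpace (𝓨 j)]
    [∀ j, Fintype (𝓩 j)] [∀ j, Nonempty (𝓩 j)] [∀ j, MeasurableSpace (𝓩 j)] [∀ j, DiscreteMeasurableSpace (𝓩 j)]
    [∀ j, Fintype (𝓢 j)] [∀ j, Nonempty (𝓢 j)] [∀ j, MeasurableSpace (𝓢 j)] [∀ j, DiscreteMeasurableSpace (𝓢 j)]
    [∀ j, Fintype (𝓚 j)] [∀ j, Nonempty (𝓚 j)] [∀ j, MeasurableSpace (𝓚 j)] [∀ j, DiscreteMeasurableSpace (𝓚 j)]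
    (M : Ω → 𝓜) (X : ∀ j, Ω → 𝓧 j) (Y : ∀ j, Ω → 𝓨 j) (Z : ∀ j, Ω → 𝓩 j)
    (S : ∀ j, Ω → 𝓢 j) (K : ∀ j, Ω → 𝓚 j)
    (hM : Measurable M) (hX : ∀ j, Measurable (X j)) (hY : ∀ j, Measurable (Y j))
    (hZ : ∀ j, Measurable (Z j)) (hS : ∀ j, Measurable (S j)) (hK : ∀ j, Measurable (K j))
    -- (i) Y_j ⊥ (M, X^{j-1}, K^j, Y^{j-1}, Z^{j-1}, S^{j-1}) | (X_j, Z_j, S_j)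
    (hi : ∀ j : Fin n, condMutInfo μ (Y j)
      (fun ω => (M ω, pre X j.1 j.2.le ω, pre K (j.1 + 1) j.2 ω,
        pre Y j.1 j.2.le ω, pre Z j.1 j.2.le ω, pre S j.1 j.2.le ω))
      (fun ω => (X j ω, Z j ω, S j ω)) = 0)
    -- (ii) (S_j, Z_j) ⊥ Y^{j-1} | (M, X^j, K^j, Z^{j-1}, S^{j-1})
    (hii : ∀ j : Fin n, condMutInfo μ (fun ω => (S j ω, Z j ω)) (pre Y j.1 j.2.le)
      (fun ω => (M ω, pre X (j.1 + 1) j.2 ω, pre K (j.1 + 1) j.2 ω,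
        pre Z j.1 j.2.le ω, pre S j.1 j.2.le ω)) = 0)
    -- (iii) X_j ⊥ Y^{j-1} | (M, X^{j-1}, K^j, Z^{j-1}, S^{j-1})
    (hiii : ∀ j : Fin n, condMutInfo μ (X j) (pre Y j.1 j.2.le)
      (fun ω => (M ω, pre X j.1 j.2.le ω, pre K (j.1 + 1) j.2 ω,
        pre Z j.1 j.2.le ω, pre S j.1 j.2.le ω)) = 0)
    -- (iv) K_j ⊥ (M, X^{j-1}) | (Y^{j-1}, K^{j-1}, Z^{j-1}, S^{j-1})
    (hiv : ∀ j : Fin n, condMutInfo μ (K j) (fun ω => (M ω, pre X j.1 j.2.le ω))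
      (fun ω => (pre Y j.1 j.2.le ω, pre K j.1 j.2.le ω,
        pre Z j.1 j.2.le ω, pre S j.1 j.2.le ω)) = 0) :
    condEnt μ (pre K n le_rfl) (fun ω => (pre Z n le_rfl ω, pre S n le_rfl ω))
      + condMutInfo μ (fun ω => (M ω, pre X n le_rfl ω)) (pre Y n le_rfl)
          (fun ω => (pre K n le_rfl ω, pre Z n le_rfl ω, pre S n le_rfl ω))
      + condEnt μ (pre S n le_rfl) (pre Z n le_rfl)
    ≤ ∑ j : Fin n,
        (condMutInfo μ (X j) (Y j) (fun ω => (Z j ω, S j ω))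
          + condEnt μ (S j) (Z j) + ent μ (K j)) := by
  have key := stmt_key μ M X Y Z S K hM hX hY hZ hS hK hi hii hiii hiv n le_rfl
  have n1 : ent μ (fun ω => ((M ω, pre X n le_rfl ω),
        (pre K n le_rfl ω, pre Z n le_rfl ω, pre S n le_rfl ω)))
      = ent μ (fun ω => (M ω, pre X n le_rfl ω, pre K n le_rfl ω, pre Z n le_rfl ω,
          pre S n le_rfl ω)) :=
    ent_congr μ _ _ (fun ⟨m, px, pk, pz, ps⟩ => ((m, px), (pk, pz, ps)))
      (fun ⟨⟨m, px⟩, pk, pz, ps⟩ => (m, px, pk, pz, ps))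
      (by rintro ⟨m, px, pk, pz, ps⟩; rfl) (fun _ => rfl)
  have n2 : ent μ (fun ω => (((M ω, pre X n le_rfl ω), pre Y n le_rfl ω),
        (pre K n le_rfl ω, pre Z n le_rfl ω, pre S n le_rfl ω)))
      = ent μ (fun ω => (M ω, pre X n le_rfl ω, pre Y n le_rfl ω, pre K n le_rfl ω,
          pre Z n le_rfl ω, pre S n le_rfl ω)) :=
    ent_congr μ _ _ (fun ⟨m, px, py, pk, pz, ps⟩ => (((m, px), py), (pk, pz, ps)))
      (fun ⟨⟨⟨m, px⟩, py⟩, pk, pz, ps⟩ => (m, px, py, pk, pz, ps))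
      (by rintro ⟨m, px, py, pk, pz, ps⟩; rfl) (fun _ => rfl)
  have n3 : ent μ (fun ω => (pre S n le_rfl ω, pre Z n le_rfl ω))
      = ent μ (fun ω => (pre Z n le_rfl ω, pre S n le_rfl ω)) :=
    ent_congr μ _ _ (fun ⟨pz, ps⟩ => (ps, pz)) (fun ⟨ps, pz⟩ => (pz, ps))
      (by rintro ⟨pz, ps⟩; rfl) (fun _ => rfl)
  have hfin : (∑ i : Fin n, (condMutInfo μ (X (Fin.castLE le_rfl i)) (Y (Fin.castLE le_rfl i)) (fun ω => (Z (Fin.castLE le_rfl i) ω, S (Fin.castLE le_rfl i) ω)) + condEnt μ (S (Fin.castLE le_rfl i)) (Z (Fin.castLE le_rfl i)) + ent μ (K (Fin.castLE le_rfl i))))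
      = ∑ j : Fin n, (condMutInfo μ (X j) (Y j) (fun ω => (Z j ω, S j ω)) + condEnt μ (S j) (Z j) + ent μ (K j)) :=
    Finset.sum_congr rfl fun i _ => rfl
  have lhs_eq : condEnt μ (pre K n le_rfl) (fun ω => (pre Z n le_rfl ω, pre S n le_rfl ω))
      + condMutInfo μ (fun ω => (M ω, pre X n le_rfl ω)) (pre Y n le_rfl)
          (fun ω => (pre K n le_rfl ω, pre Z n le_rfl ω, pre S n le_rfl ω))
      + condEnt μ (pre S n le_rfl) (pre Z n le_rfl)
      = ent μ (fun ω => (M ω, pre X n le_rfl ω, pre K n le_rfl ω, pre Z n le_rfl ω,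
          pre S n le_rfl ω))
        + ent μ (fun ω => (pre Y n le_rfl ω, pre K n le_rfl ω, pre Z n le_rfl ω,
            pre S n le_rfl ω))
        - ent μ (fun ω => (M ω, pre X n le_rfl ω, pre Y n le_rfl ω, pre K n le_rfl ω,
            pre Z n le_rfl ω, pre S n le_rfl ω))
        - ent μ (pre Z n le_rfl) := by
    simp only [condMutInfo, condEnt]
    linarith [n1, n2, n3]
  linarith [key, lhs_eq, hfin]
end

section
/- Let S, X, N, N' be Bool-valued random variables on a common probability space such that: P(S = true) = q with 0 < q < 1; X is uniformly distributed and independent of (S, N, N'); N' is independent of (S, N, X) with P(N' = true) = r; P(N = true | S = false) = p₀ and P(N = true | S = true) = p₁. Set Y = X xor N and Z = Y xor N'. Then I(X ; Y | S) − I(X ; Z | S) + H(S | Z) = (1−q) h(p₀ ∗ r) + q h(p₁ ∗ r) − (1−q) h(p₀) − q h(p₁) + h(q). -/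
open MeasureTheory ProbabilityTheory Real

lemma ent_comp {Ω : Type*} [MeasurableSpace Ω] (μ : Measure Ω) [IsProbabilityMeasure μ]
    {α β : Type*} [Fintype α] [Fintype β] [MeasurableSpace α] [MeasurableSingletonClass α]
    [DecidableEq β]
    (W : Ω → α) (hW : Measurable W) (f : α → β) :
    ent μ (fun ω => f (W ω))
      = ∑ b : β, Real.negMulLog (∑ a : α, if f a = b then (μ (W ⁻¹' {a})).toReal else 0) := by
  unfold ent
  refine Finset.sum_congr rfl fun b _ => ?_
  congr 1
  have h1 : (fun ω => f (W ω)) ⁻¹' {b} = W ⁻¹' (f ⁻¹' {b}) := rfl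
  have h2 : f ⁻¹' {b} = ⋃ a ∈ Finset.univ.filter (fun a => f a = b), ({a} : Set α) := by
    ext x; simp [eq_comm]
  rw [h1, h2, Set.preimage_iUnion₂]
  rw [measure_biUnion_finset ?hd ?hm]
  · rw [ENNReal.toReal_sum (fun a _ => measure_ne_top μ _), Finset.sum_filter]
  case hd =>
    intro a _ a' _ hne
    simp only [Function.onFun]
    refine Set.disjoint_left.2 fun ω hω hω' => hne ?_
    simp only [Set.mem_preimage, Set.mem_singleton_iff] at hω hω'
    rw [← hω, ← hω']
  case hm => exact fun a _ => hW (measurableSet_singleton a)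

lemma nml_split (a t : ℝ) : Real.negMulLog (a * t / 2)
    = t * Real.negMulLog (a / 2) + (a / 2) * Real.negMulLog t := by
  have h : a * t / 2 = (a / 2) * t := by ring
  rw [h, Real.negMulLog_mul]

lemma nml_half (t : ℝ) : Real.negMulLog (t / 2)
    = t * Real.negMulLog (1 / 2) + (1 / 2) * Real.negMulLog t := by
  have h : t / 2 = (1 / 2 : ℝ) * t := by ring
  rw [h, Real.negMulLog_mul]

lemma cond_joint {Ω : Type*} [MeasurableSpace Ω] (μ : Measure Ω) [IsProbabilityMeasure μ]
    {s : Set Ω} (hs : MeasurableSet s) (t : Set Ω) :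
    (μ (s ∩ t)).toReal = (μ s).toReal * (μ[|s] t).toReal := by
  rw [cond_apply hs, ENNReal.toReal_mul, ENNReal.toReal_inv]
  rcases eq_or_ne (μ s) 0 with h | h
  · have h2 : μ (s ∩ t) = 0 := measure_mono_null Set.inter_subset_left h
    simp [h, h2]
  · rw [mul_inv_cancel_left₀ (ENNReal.toReal_ne_zero.2 ⟨h, measure_ne_top μ s⟩)]

lemma inter_bool_false {Ω : Type*} [MeasurableSpace Ω] (μ : Measure Ω) [IsProbabilityMeasure μ]
    (s : Set Ω) (T : Ω → Bool) (hT : Measurable T) :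
    (μ (s ∩ T ⁻¹' {false})).toReal = (μ s).toReal - (μ (s ∩ T ⁻¹' {true})).toReal := by
  have h := measure_inter_add_diff (μ := μ) s (hT (measurableSet_singleton true))
  have hc : s \ T ⁻¹' {true} = s ∩ T ⁻¹' {false} := by
    ext ω; by_cases hb : T ω <;> simp [Set.mem_diff, hb]
  rw [hc] at h
  have h2 : (μ (s ∩ T ⁻¹' {true})).toReal + (μ (s ∩ T ⁻¹' {false})).toReal = (μ s).toReal := by
    rw [← ENNReal.toReal_add (measure_ne_top μ _) (measure_ne_top μ _), h]
  linarith

/-- secrecy-rate expression for the degraded state-dependent binary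
symmetric wiretap channel: with S, X, N, N' Bool-valued, P(S = true) = q,
X uniform and independent of (S,N,N'), N' independent of (S,N,X) with
P(N' = true) = r, P(N = true | S = false) = p₀, P(N = true | S = true) = p₁,
Y = X xor N and Z = Y xor N', one has
I(X;Y|S) - I(X;Z|S) + H(S|Z)
  = (1-q) h(p₀ * r) + q h(p₁ * r) - (1-q) h(p₀) - q h(p₁) + h(q),
where p * r denotes the binary convolution p(1-r) + (1-p)r. -/
theorem stmt_13
    {Ω : Type*} [MeasurableSpace Ω] (μ : Measure Ω) [IsProbabilityMeasure μ]
    (S X N N' Y Z : Ω → Bool)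
    (hS : Measurable S) (hX : Measurable X) (hN : Measurable N) (hN' : Measurable N')
    {q r p₀ p₁ : ℝ} (hq : 0 < q ∧ q < 1)
    (hSq : (μ (S ⁻¹' {true})).toReal = q)
    (hXunif : ∀ b : Bool, μ (X ⁻¹' {b}) = 2⁻¹)
    (hXindep : IndepFun X (fun ω => (S ω, N ω, N' ω)) μ)
    (hN'indep : IndepFun N' (fun ω => (S ω, N ω, X ω)) μ)
    (hN'r : (μ (N' ⁻¹' {true})).toReal = r)
    (hp₀ : (μ[|S ⁻¹' {false}] (N ⁻¹' {true})).toReal = p₀)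
    (hp₁ : (μ[|S ⁻¹' {true}] (N ⁻¹' {true})).toReal = p₁)
    (hY : Y = fun ω => xor (X ω) (N ω))
    (hZ : Z = fun ω => xor (Y ω) (N' ω)) :
    condMutInfo μ X Y S - condMutInfo μ X Z S + condEnt μ S Z
      = (1 - q) * binEntropy (p₀ * (1 - r) + (1 - p₀) * r)
        + q * binEntropy (p₁ * (1 - r) + (1 - p₁) * r)
        - (1 - q) * binEntropy p₀ - q * binEntropy p₁ + binEntropy q := by
  obtain ⟨hq0, hq1⟩ := hq
  subst hZ; subst hY
  -- basic marginals
  have hmt : MeasurableSet (S ⁻¹' {true}) := hS (measurableSet_singleton true)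
  have hmf : MeasurableSet (S ⁻¹' {false}) := hS (measurableSet_singleton false)
  have hSf : (μ (S ⁻¹' {false})).toReal = 1 - q := by
    have h := inter_bool_false μ Set.univ S hS
    simpa [Set.univ_inter, hSq] using h
  have hN'f : (μ (N' ⁻¹' {false})).toReal = 1 - r := by
    have h := inter_bool_false μ Set.univ N' hN'
    simpa [Set.univ_inter, hN'r] using h
  have hXhalf : ∀ x : Bool, (μ (X ⁻¹' {x})).toReal = 1 / 2 := by
    intro x; rw [hXunif x]; simp
  have hN'v : ∀ n' : Bool, (μ (N' ⁻¹' {n'})).toReal = if n' then r else 1 - r := by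
    rintro (_ | _) <;> simp [hN'f, hN'r]
  -- joint of S and N
  have hSN : ∀ s n : Bool, (μ (S ⁻¹' {s} ∩ N ⁻¹' {n})).toReal
      = (if s then q else 1 - q) *
        (if n then (if s then p₁ else p₀) else 1 - (if s then p₁ else p₀)) := by
    have hft : (μ (S ⁻¹' {false} ∩ N ⁻¹' {true})).toReal = (1 - q) * p₀ := by
      rw [cond_joint μ hmf, hSf, hp₀]
    have htt : (μ (S ⁻¹' {true} ∩ N ⁻¹' {true})).toReal = q * p₁ := by
      rw [cond_joint μ hmt, hSq, hp₁]
    have hff := inter_bool_false μ (S ⁻¹' {false}) N hN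
    have htf := inter_bool_false μ (S ⁻¹' {true}) N hN
    rintro (_ | _) (_ | _) <;>
      simp only [if_true, if_false, Bool.false_eq_true, Bool.true_eq_false] <;>
      [skip; exact hft; skip; exact htt]
    · rw [hff, hSf, hft]; ring
    · rw [htf, hSq, htt]; ring
  -- atom probabilities
  have hWm : Measurable (fun ω => (S ω, N ω, N' ω, X ω)) :=
    hS.prodMk (hN.prodMk (hN'.prodMk hX))
  have hind2 : IndepFun N' (fun ω => (S ω, N ω)) μ := by
    have h := hN'indep.comp (measurable_id : Measurable (fun b : Bool => b))
      ((measurable_fst).prodMk (measurable_fst.comp measurable_snd) :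
        Measurable (fun p : Bool × Bool × Bool => (p.1, p.2.1)))
    exact h
  have hAtom : ∀ s n n' x : Bool,
      (μ ((fun ω => (S ω, N ω, N' ω, X ω)) ⁻¹' {(s, n, n', x)})).toReal
        = ((if s then q else 1 - q) *
            (if n then (if s then p₁ else p₀) else 1 - (if s then p₁ else p₀)))
          * (if n' then r else 1 - r) * (1 / 2) := by
    intro s n n' x
    have hset : (fun ω => (S ω, N ω, N' ω, X ω)) ⁻¹' {(s, n, n', x)}
        = X ⁻¹' {x} ∩ ((fun ω => (S ω, N ω, N' ω)) ⁻¹' {(s, n, n')}) := by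
      ext ω; simp only [Set.mem_preimage, Set.mem_singleton_iff, Set.mem_inter_iff,
        Prod.mk.injEq]
      tauto
    have hset2 : (fun ω => (S ω, N ω, N' ω)) ⁻¹' {(s, n, n')}
        = N' ⁻¹' {n'} ∩ ((fun ω => (S ω, N ω)) ⁻¹' {(s, n)}) := by
      ext ω; simp only [Set.mem_preimage, Set.mem_singleton_iff, Set.mem_inter_iff,
        Prod.mk.injEq]
      tauto
    have hset3 : (fun ω => (S ω, N ω)) ⁻¹' {(s, n)} = S ⁻¹' {s} ∩ N ⁻¹' {n} := by
      ext ω; simp only [Set.mem_preimage, Set.mem_singleton_iff, Set.mem_inter_iff,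
        Prod.mk.injEq]
    rw [hset, hXindep.measure_inter_preimage_eq_mul _ _ (measurableSet_singleton x)
      (measurableSet_singleton _)]
    rw [hset2, hind2.measure_inter_preimage_eq_mul _ _ (measurableSet_singleton n')
      (measurableSet_singleton _)]
    rw [hset3, ENNReal.toReal_mul, ENNReal.toReal_mul, hXhalf, hN'v, hSN]
    ring
  -- entropy computations
  have eYS : ent μ (fun ω => (xor (X ω) (N ω), S ω))
      = 2 * negMulLog ((1 - q) / 2) + 2 * negMulLog (q / 2) := by
    refine Eq.trans (ent_comp μ (fun ω => (S ω, N ω, N' ω, X ω)) hWm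
      (fun w => (xor w.2.2.2 w.2.1, w.1))) ?_
    simp only [hAtom, Fintype.sum_prod_type, Fintype.sum_bool, Prod.mk.injEq]
    norm_num
    ring_nf
  have eXYS : ent μ (fun ω => ((X ω, xor (X ω) (N ω)), S ω))
      = 2 * (negMulLog ((1 - q) * (1 - p₀) / 2) + negMulLog ((1 - q) * p₀ / 2)
        + negMulLog (q * (1 - p₁) / 2) + negMulLog (q * p₁ / 2)) := by
    refine Eq.trans (ent_comp μ (fun ω => (S ω, N ω, N' ω, X ω)) hWm
      (fun w => ((w.2.2.2, xor w.2.2.2 w.2.1), w.1))) ?_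
    simp only [hAtom, Fintype.sum_prod_type, Fintype.sum_bool, Prod.mk.injEq]
    norm_num
    ring_nf
  have eZS : ent μ (fun ω => (xor (xor (X ω) (N ω)) (N' ω), S ω))
      = 2 * negMulLog ((1 - q) / 2) + 2 * negMulLog (q / 2) := by
    refine Eq.trans (ent_comp μ (fun ω => (S ω, N ω, N' ω, X ω)) hWm
      (fun w => (xor (xor w.2.2.2 w.2.1) w.2.2.1, w.1))) ?_
    simp only [hAtom, Fintype.sum_prod_type, Fintype.sum_bool, Prod.mk.injEq]
    norm_num
    ring_nf
  have eXZS : ent μ (fun ω => ((X ω, xor (xor (X ω) (N ω)) (N' ω)), S ω))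
      = 2 * (negMulLog ((1 - q) * (1 - (p₀ * (1 - r) + (1 - p₀) * r)) / 2)
        + negMulLog ((1 - q) * (p₀ * (1 - r) + (1 - p₀) * r) / 2)
        + negMulLog (q * (1 - (p₁ * (1 - r) + (1 - p₁) * r)) / 2)
        + negMulLog (q * (p₁ * (1 - r) + (1 - p₁) * r) / 2)) := by
    refine Eq.trans (ent_comp μ (fun ω => (S ω, N ω, N' ω, X ω)) hWm
      (fun w => ((w.2.2.2, xor (xor w.2.2.2 w.2.1) w.2.2.1), w.1))) ?_
    simp only [hAtom, Fintype.sum_prod_type, Fintype.sum_bool, Prod.mk.injEq]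
    norm_num
    ring_nf
  have eSZ : ent μ (fun ω => (S ω, xor (xor (X ω) (N ω)) (N' ω)))
      = 2 * negMulLog ((1 - q) / 2) + 2 * negMulLog (q / 2) := by
    refine Eq.trans (ent_comp μ (fun ω => (S ω, N ω, N' ω, X ω)) hWm
      (fun w => (w.1, xor (xor w.2.2.2 w.2.1) w.2.2.1))) ?_
    simp only [hAtom, Fintype.sum_prod_type, Fintype.sum_bool, Prod.mk.injEq]
    norm_num
    ring_nf
  have eZ : ent μ (fun ω => xor (xor (X ω) (N ω)) (N' ω))
      = 2 * negMulLog (1 / 2) := by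
    refine Eq.trans (ent_comp μ (fun ω => (S ω, N ω, N' ω, X ω)) hWm
      (fun w => xor (xor w.2.2.2 w.2.1) w.2.2.1)) ?_
    simp only [hAtom, Fintype.sum_prod_type, Fintype.sum_bool]
    norm_num
    ring_nf
  -- final assembly
  simp only [condMutInfo, condEnt]
  rw [eYS, eXYS, eZS, eXZS, eSZ, eZ]
  rw [nml_split (1 - q) (1 - p₀), nml_split (1 - q) p₀,
    nml_split q (1 - p₁), nml_split q p₁,
    nml_split (1 - q) (1 - (p₀ * (1 - r) + (1 - p₀) * r)),
    nml_split (1 - q) (p₀ * (1 - r) + (1 - p₀) * r),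
    nml_split q (1 - (p₁ * (1 - r) + (1 - p₁) * r)),
    nml_split q (p₁ * (1 - r) + (1 - p₁) * r),
    nml_half (1 - q), nml_half q]
  simp only [binEntropy_eq_negMulLog_add_negMulLog_one_sub]
  ring
end
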